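/- arXiv:math/0104261 — 7 statements merged into one kernel-verified Lean document; each statement's English description precedes it below -/
import Mathlib

section
/- Let β be a ℤ^d-action on an infinite compact metric space (X,ρ) and let V be a (d−1)-dimensional linear subspace of ℝ^d. Then V is nonexpansive for β if and only if at least one of the two closed half-spaces bounded by V is nonexpansive for β; that is, V is nonexpansive if and only if H_v or H_{−v} is nonexpansive, where v is a unit normal vector to V. -/
open scoped RealInnerProductSpace

noncomputable section

/-- Euclidean space `ℝ^d`. -/
abbrev Rspace (d : ℕ) : Type := EuclideanSpace ℝ (Fin d)

/-- The natural embedding `ℤ^d → ℝ^d`. -/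
def intVec {d : ℕ} (n : Fin d → ℤ) : Rspace d := WithLp.toLp 2 (fun i => (n i : ℝ))

/-- A subset `F ⊆ ℝ^d` is expansive for the `ℤ^d`-action `β` on the compact metric
space `X`: there are `ε > 0` and a thickening parameter `t > 0` such that
`sup {dist(β^n x, β^n y) : n ∈ F^t ∩ ℤ^d} ≤ ε` forces `x = y`. -/
def ExpansiveAlong {d : ℕ} {X : Type*} [MetricSpace X] (β : (Fin d → ℤ) → X ≃ₜ X)
    (F : Set (Rspace d)) : Prop :=
  ∃ ε > 0, ∃ t > 0, ∀ x y : X,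
    (∀ n : Fin d → ℤ, Metric.infDist (intVec n) F ≤ t → dist (β n x) (β n y) ≤ ε) → x = y

/-- The half-space `H_v = {x : x·v ≤ 0}` is expansive for the `ℤ^d`-action `β`
(for half-spaces no thickening is needed, since a thickened half-space is a translate
of the original one). -/
def ExpansiveHalf {d : ℕ} {X : Type*} [MetricSpace X] (β : (Fin d → ℤ) → X ≃ₜ X)
    (v : Rspace d) : Prop :=
  ∃ ε > 0, ∀ x y : X,
    (∀ n : Fin d → ℤ, ⟪intVec n, v⟫ ≤ 0 → dist (β n x) (β n y) ≤ ε) → x = y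

lemma intVec_add {d : ℕ} (m n : Fin d → ℤ) : intVec (m + n) = intVec m + intVec n := by
  ext i; simp [intVec]

lemma inner_intVec_add {d : ℕ} (m n : Fin d → ℤ) (v : Rspace d) :
    ⟪intVec (m + n), v⟫ = ⟪intVec m, v⟫ + ⟪intVec n, v⟫ := by
  rw [intVec_add, inner_add_left]

lemma exists_intVec_le {d : ℕ} (v : Rspace d) (hv : v ≠ 0) (M : ℝ) :
    ∃ w : Fin d → ℤ, ⟪intVec w, v⟫ ≤ -M := by
  have : ∃ i, v i ≠ 0 := by
    by_contra h
    push_neg at h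
    exact hv (PiLp.ext fun i => by simp [h i])
  obtain ⟨i, hi⟩ := this
  rcases hi.lt_or_gt with hneg | hpos
  · refine ⟨fun j => if j = i then ⌈M / (-v i)⌉ else 0, ?_⟩
    have : ⟪intVec (fun j => if j = i then (⌈M / (-v i)⌉ : ℤ) else 0), v⟫
        = (⌈M / (-v i)⌉ : ℝ) * v i := by
      simp [PiLp.inner_apply, RCLike.inner_apply, intVec, apply_ite,
        Finset.sum_ite_eq', mul_comm]
    rw [this]
    have h1 : M / (-v i) ≤ (⌈M / (-v i)⌉ : ℝ) := Int.le_ceil _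
    have h2 : (0:ℝ) < -v i := by linarith
    nlinarith [div_mul_cancel₀ M (ne_of_gt h2)]
  · refine ⟨fun j => if j = i then -⌈M / v i⌉ else 0, ?_⟩
    have : ⟪intVec (fun j => if j = i then (-⌈M / v i⌉ : ℤ) else 0), v⟫
        = -(⌈M / v i⌉ : ℝ) * v i := by
      simp [PiLp.inner_apply, RCLike.inner_apply, intVec, apply_ite,
        Finset.sum_ite_eq', mul_comm]
    rw [this]
    have h1 : M / v i ≤ (⌈M / v i⌉ : ℝ) := Int.le_ceil _
    nlinarith [div_mul_cancel₀ M (ne_of_gt hpos)]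

lemma exists_intVec_ge {d : ℕ} (v : Rspace d) (hv : v ≠ 0) (M : ℝ) :
    ∃ w : Fin d → ℤ, M ≤ ⟪intVec w, v⟫ := by
  obtain ⟨w, hw⟩ := exists_intVec_le (-v) (neg_ne_zero.mpr hv) M
  rw [inner_neg_right] at hw
  exact ⟨w, by linarith⟩

lemma infDist_eq_abs_inner {d : ℕ} (hd : 1 ≤ d) (V : Submodule ℝ (Rspace d))
    (hV : Module.finrank ℝ V = d - 1) (v : Rspace d) (hv : ‖v‖ = 1) (hvV : v ∈ Vᗮ)
    (x : Rspace d) :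
    Metric.infDist x (V : Set (Rspace d)) = |⟪x, v⟫| := by
  have hv0 : v ≠ 0 := by intro h; rw [h] at hv; simp at hv
  have hspan : (ℝ ∙ v) = Vᗮ := by
    apply Submodule.eq_of_le_of_finrank_eq
    · rw [Submodule.span_le, Set.singleton_subset_iff]; exact hvV
    · have h1 : Module.finrank ℝ (ℝ ∙ v) = 1 := finrank_span_singleton hv0
      have h2 : Module.finrank ℝ V + Module.finrank ℝ Vᗮ
          = Module.finrank ℝ (Rspace d) := Submodule.finrank_add_finrank_orthogonal V
      rw [finrank_euclideanSpace_fin] at h2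
      rw [h1, hV] at *
      omega
  have hVmem : ∀ z : Rspace d, z ∈ V ↔ ⟪v, z⟫ = 0 := by
    intro z
    rw [← Submodule.mem_orthogonal_singleton_iff_inner_right, hspan,
      Submodule.orthogonal_orthogonal]
  apply le_antisymm
  · have hp : x - ⟪x, v⟫ • v ∈ V := by
      rw [hVmem]
      rw [inner_sub_right, inner_smul_right]
      have : ⟪v, v⟫ = 1 := by
        rw [real_inner_self_eq_norm_sq, hv]; norm_num
      rw [this, real_inner_comm]
      ring
    have := Metric.infDist_le_dist_of_mem (x := x) hp
    calc Metric.infDist x (V : Set (Rspace d)) ≤ dist x (x - ⟪x, v⟫ • v) := this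
      _ = |⟪x, v⟫| := by
          rw [dist_eq_norm]
          simp [norm_smul, hv, Real.norm_eq_abs]
  · by_contra hcon
    push_neg at hcon
    obtain ⟨p, hp, hlt⟩ := (Metric.infDist_lt_iff ⟨0, V.zero_mem⟩).mp hcon
    refine absurd hlt (not_lt.mpr ?_)
    have hpv : ⟪p, v⟫ = 0 := by
      rw [real_inner_comm]; exact (hVmem p).mp hp
    calc dist x p = ‖x - p‖ * ‖v‖ := by rw [hv, mul_one, dist_eq_norm]
      _ ≥ |⟪x - p, v⟫| := abs_real_inner_le_norm _ _
      _ = |⟪x, v⟫| := by rw [inner_sub_left, hpv, sub_zero]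

lemma half_of_along {d : ℕ} (hd : 1 ≤ d) {X : Type*} [MetricSpace X]
    (β : (Fin d → ℤ) → X ≃ₜ X)
    (hβ : ∀ m n : Fin d → ℤ, ∀ x : X, β (m + n) x = β m (β n x))
    (hβ0 : ∀ x : X, β 0 x = x)
    (V : Submodule ℝ (Rspace d)) (hV : Module.finrank ℝ V = d - 1)
    (v : Rspace d) (hv : ‖v‖ = 1) (hvV : v ∈ Vᗮ)
    (h : ExpansiveAlong β (V : Set (Rspace d))) : ExpansiveHalf β v := by
  obtain ⟨ε, hε, t, ht, H⟩ := h
  have hv0 : v ≠ 0 := by intro h0; rw [h0] at hv; simp at hv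
  refine ⟨ε, hε, fun x y hxy => ?_⟩
  obtain ⟨w, hw⟩ := exists_intVec_le v hv0 t
  have key : β w x = β w y := by
    apply H
    intro n hn
    rw [← hβ n w x, ← hβ n w y]
    apply hxy
    rw [infDist_eq_abs_inner hd V hV v hv hvV] at hn
    rw [inner_intVec_add]
    have := le_abs_self (⟪intVec n, v⟫)
    linarith
  have h1 : x = β (-w) (β w x) := by rw [← hβ, neg_add_cancel, hβ0]
  have h2 : y = β (-w) (β w y) := by rw [← hβ, neg_add_cancel, hβ0]
  rw [h1, h2, key]

open Filter Topology in
lemma along_of_halves {d : ℕ} (hd : 1 ≤ d) {X : Type*} [MetricSpace X] [CompactSpace X]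
    (β : (Fin d → ℤ) → X ≃ₜ X)
    (hβ : ∀ m n : Fin d → ℤ, ∀ x : X, β (m + n) x = β m (β n x))
    (hβ0 : ∀ x : X, β 0 x = x)
    (V : Submodule ℝ (Rspace d)) (hV : Module.finrank ℝ V = d - 1)
    (v : Rspace d) (hv : ‖v‖ = 1) (hvV : v ∈ Vᗮ)
    (h1 : ExpansiveHalf β v) (h2 : ExpansiveHalf β (-v)) :
    ExpansiveAlong β (V : Set (Rspace d)) := by
  obtain ⟨ε₁, hε₁, H1⟩ := h1
  obtain ⟨ε₂, hε₂, H2⟩ := h2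
  set ε := min ε₁ ε₂ with hεdef
  have hε : 0 < ε := lt_min hε₁ hε₂
  have hv0 : v ≠ 0 := by intro h0; rw [h0] at hv; simp at hv
  have key : ∃ k : ℕ, ∀ x y : X,
      (∀ n : Fin d → ℤ, |⟪intVec n, v⟫| ≤ (k : ℝ) + 1 → dist (β n x) (β n y) ≤ ε) → x = y := by
    by_contra hcon
    push_neg at hcon
    choose x y hxy hne using hcon
    -- construct translated pairs
    have trans : ∀ k : ℕ, ∃ a b : X, ε < dist a b ∧
        ∀ m : Fin d → ℤ, 1 < ⟪intVec m, v⟫ → ⟪intVec m, v⟫ ≤ (k : ℝ) + 1 →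
          dist (β m a) (β m b) ≤ ε := by
      intro k
      set S : Set ℝ := {r | r ≤ 0 ∧ ∃ n : Fin d → ℤ, ⟪intVec n, v⟫ = r ∧
        ε < dist (β n (x k)) (β n (y k))} with hSdef
      have hSne : S.Nonempty := by
        by_contra hS
        rw [Set.not_nonempty_iff_eq_empty] at hS
        apply hne k
        apply H1
        intro n hn
        by_contra hd2
        push_neg at hd2
        have : ⟪intVec n, v⟫ ∈ S :=
          ⟨hn, n, rfl, lt_of_le_of_lt (min_le_left _ _) hd2⟩
        rw [hS] at this
        exact this
      have hSbdd : BddAbove S := ⟨0, fun r hr => hr.1⟩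
      obtain ⟨r, hrS, hrgt⟩ := exists_lt_of_lt_csSup hSne
        (show sSup S - 1 < sSup S by linarith)
      obtain ⟨hr0, n, hnr, hnd⟩ := hrS
      refine ⟨β n (x k), β n (y k), hnd, ?_⟩
      intro m hm1 hmk
      rw [← hβ m n (x k), ← hβ m n (y k)]
      by_contra hdd
      push_neg at hdd
      have hq : ⟪intVec (m + n), v⟫ = ⟪intVec m, v⟫ + r := by
        rw [inner_intVec_add, hnr]
      rcases le_or_gt (⟪intVec (m + n), v⟫) 0 with hle | hgt
      · have hmem : ⟪intVec (m + n), v⟫ ∈ S := ⟨hle, m + n, rfl, hdd⟩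
        have hsup := le_csSup hSbdd hmem
        rw [hq] at hsup
        linarith
      · have habs : |⟪intVec (m + n), v⟫| ≤ (k : ℝ) + 1 := by
          rw [abs_of_pos hgt, hq]; linarith
        exact absurd (hxy k (m + n) habs) (not_le.mpr hdd)
    choose a b hab hslab using trans
    obtain ⟨p, -, φ, hφ, hlim⟩ := isCompact_univ.tendsto_subseq
      (x := fun k => ((a k, b k) : X × X)) (fun k => Set.mem_univ _)
    have hl1 : Tendsto (fun k => a (φ k)) atTop (𝓝 p.1) :=
      (continuous_fst.tendsto p).comp hlim
    have hl2 : Tendsto (fun k => b (φ k)) atTop (𝓝 p.2) :=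
      (continuous_snd.tendsto p).comp hlim
    have hdp : ε ≤ dist p.1 p.2 :=
      ge_of_tendsto (hl1.dist hl2) (Eventually.of_forall fun k => (hab (φ k)).le)
    have hhalf : ∀ m : Fin d → ℤ, 1 < ⟪intVec m, v⟫ → dist (β m p.1) (β m p.2) ≤ ε := by
      intro m hm
      have hlm : Tendsto (fun k => dist (β m (a (φ k))) (β m (b (φ k)))) atTop
          (𝓝 (dist (β m p.1) (β m p.2))) :=
        ((((β m).continuous).tendsto _).comp hl1).dist ((((β m).continuous).tendsto _).comp hl2)
      refine le_of_tendsto hlm ?_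
      filter_upwards [eventually_ge_atTop ⌈⟪intVec m, v⟫⌉₊] with k hk
      apply hslab (φ k) m hm
      have hk2 : (⌈⟪intVec m, v⟫⌉₊ : ℝ) ≤ (φ k : ℝ) := by
        exact_mod_cast le_trans hk hφ.le_apply
      have hk3 := Nat.le_ceil (⟪intVec m, v⟫)
      linarith
    obtain ⟨w, hw⟩ := exists_intVec_ge v hv0 2
    have hpw : β w p.1 = β w p.2 := by
      apply H2
      intro m hm
      rw [inner_neg_right] at hm
      rw [← hβ m w p.1, ← hβ m w p.2]
      refine le_trans (hhalf (m + w) ?_) (min_le_right _ _)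
      rw [inner_intVec_add]
      linarith
    have hp12 : p.1 = p.2 := by
      have e1 : p.1 = β (-w) (β w p.1) := by rw [← hβ, neg_add_cancel, hβ0]
      have e2 : p.2 = β (-w) (β w p.2) := by rw [← hβ, neg_add_cancel, hβ0]
      rw [e1, e2, hpw]
    rw [hp12] at hdp
    simp at hdp
    linarith
  obtain ⟨k, hk⟩ := key
  refine ⟨ε, hε, (k : ℝ) + 1, by positivity, fun x y hxy => ?_⟩
  apply hk
  intro n hn
  apply hxy
  rw [infDist_eq_abs_inner hd V hV v hv hvV]
  exact hn

/-- Let `β` be a `ℤ^d`-action on an infinite compact metric space `X`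
and let `V` be a `(d-1)`-dimensional linear subspace of `ℝ^d`, with unit normal vector
`v`.  Then `V` is nonexpansive for `β` if and only if at least one of the two closed
half-spaces `H_v`, `H_{-v}` bounded by `V` is nonexpansive for `β`. -/

theorem nonexpansive_plane_iff_halfspace {d : ℕ} (hd : 1 ≤ d)
    {X : Type*} [MetricSpace X] [CompactSpace X] [Infinite X]
    (β : (Fin d → ℤ) → X ≃ₜ X)
    (hβ : ∀ m n : Fin d → ℤ, ∀ x : X, β (m + n) x = β m (β n x))
    (hβ0 : ∀ x : X, β 0 x = x)
    (V : Submodule ℝ (Rspace d)) (hV : Module.finrank ℝ V = d - 1)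
    (v : Rspace d) (hv : ‖v‖ = 1) (hvV : v ∈ Vᗮ) :
    ¬ ExpansiveAlong β (V : Set (Rspace d)) ↔
      (¬ ExpansiveHalf β v ∨ ¬ ExpansiveHalf β (-v)) := by

  have hv0 : v ≠ 0 := by intro h0; rw [h0] at hv; simp at hv
  have hvV' : -v ∈ Vᗮ := neg_mem hvV
  have hv' : ‖-v‖ = 1 := by rw [norm_neg]; exact hv
  constructor
  · intro hEA
    by_contra hcon
    push_neg at hcon
    exact hEA (along_of_halves hd β hβ hβ0 V hV v hv hvV hcon.1 hcon.2)
  · intro hcon hEA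
    rcases hcon with h | h
    · exact h (half_of_along hd β hβ hβ0 V hV v hv hvV hEA)
    · exact h (half_of_along hd β hβ hβ0 V hV (-v) hv' hvV' hEA)
end
end

section
/- Let M be a Noetherian R_d-module and let H = H_v be a half-space in ℝ^d. Then M is R_H-Noetherian if and only if R_d/p is R_H-Noetherian for every prime ideal p ∈ asc(M). -/
open scoped RealInnerProductSpace

noncomputable section

/-- The ring `R_d = ℤ[u₁^{±1}, …, u_d^{±1}]` of Laurent polynomials with integer
coefficients, realized as the group algebra of `ℤ^d` over `ℤ`. -/
abbrev LaurentRing (d : ℕ) : Type := AddMonoidAlgebra ℤ (Fin d → ℤ)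

/-- The monomial `u^n` in `R_d`. -/
def mono {d : ℕ} (n : Fin d → ℤ) : LaurentRing d := AddMonoidAlgebra.single n 1

/-- The subring `R_H = ℤ[u^n : n·v ≤ 0]` of `R_d` attached to the half-space
`H_v = {x : x·v ≤ 0}`. -/
def RH {d : ℕ} (v : Rspace d) : Subring (LaurentRing d) :=
  Subring.closure {f : LaurentRing d | ∃ n : Fin d → ℤ, ⟪intVec n, v⟫ ≤ 0 ∧ f = mono n}

/-- An `R_d`-module `M` is Noetherian over a subring `S ⊆ R_d` if it satisfies the
ascending chain condition for `S`-submodules (equivalently, all `S`-submodules are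
finitely generated). -/
def NoetherianOver {d : ℕ} (S : Subring (LaurentRing d)) (M : Type*) [AddCommGroup M]
    [Module (LaurentRing d) M] : Prop :=
  letI : Module S M := Module.compHom M S.subtype
  IsNoetherian S M



section Gen

variable {R : Type*} [CommRing R] (S : Subring R)

/-- `M` is Noetherian as a module over the subring `S ⊆ R`. -/
def NOver (M : Type*) [AddCommGroup M] [Module R M] : Prop :=
  letI : Module S M := Module.compHom M S.subtype
  IsNoetherian S M

variable {S}

/-- An `R`-linear map is `S`-linear for the restricted module structures. -/
def restrictMap {M N : Type*} [AddCommGroup M] [Module R M] [AddCommGroup N] [Module R N]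
    (f : M →ₗ[R] N) :
    letI : Module S M := Module.compHom M S.subtype
    letI : Module S N := Module.compHom N S.subtype
    M →ₗ[S] N :=
  letI : Module S M := Module.compHom M S.subtype
  letI : Module S N := Module.compHom N S.subtype
  { toFun := f
    map_add' := f.map_add
    map_smul' := fun s m => f.map_smul s.1 m }

theorem NOver.of_injective {M N : Type*} [AddCommGroup M] [Module R M] [AddCommGroup N]
    [Module R N] (h : NOver S N) (f : M →ₗ[R] N) (hf : Function.Injective f) :
    NOver S M := by
  letI : Module S M := Module.compHom M S.subtype
  letI : Module S N := Module.compHom N S.subtype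
  haveI : IsNoetherian S N := h
  exact isNoetherian_of_injective (restrictMap f) hf

theorem NOver.of_surjective {M N : Type*} [AddCommGroup M] [Module R M] [AddCommGroup N]
    [Module R N] (h : NOver S M) (f : M →ₗ[R] N) (hf : Function.Surjective f) :
    NOver S N := by
  letI : Module S M := Module.compHom M S.subtype
  letI : Module S N := Module.compHom N S.subtype
  haveI : IsNoetherian S M := h
  exact isNoetherian_of_surjective (restrictMap f) (LinearMap.range_eq_top.mpr hf)

theorem NOver.of_sub_quot {M : Type*} [AddCommGroup M] [Module R M] (N : Submodule R M)
    (h1 : NOver S N) (h2 : NOver S (M ⧸ N)) : NOver S M := by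
  letI : Module S M := Module.compHom M S.subtype
  letI : Module S N := Module.compHom (↥N) S.subtype
  letI : Module S (M ⧸ N) := Module.compHom (M ⧸ N) S.subtype
  haveI : IsNoetherian S N := h1
  haveI : IsNoetherian S (M ⧸ N) := h2
  refine isNoetherian_of_range_eq_ker (restrictMap N.subtype) (restrictMap N.mkQ) ?_
  ext x
  constructor
  · rintro ⟨y, rfl⟩
    show N.mkQ y.1 = 0
    simpa [Submodule.Quotient.mk_eq_zero] using y.2
  · intro hx
    have hx' : N.mkQ x = 0 := hx
    exact ⟨⟨x, (Submodule.Quotient.mk_eq_zero N).mp hx'⟩, rfl⟩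

end Gen


theorem colon_bot_singleton_eq' {R : Type*} [CommRing R] {M : Type*} [AddCommGroup M]
    [Module R M] (x : M) : (⊥ : Submodule R M).colon {x} = (R ∙ x).annihilator := by
  ext r
  rw [Submodule.mem_colon_singleton, Submodule.mem_annihilator_span_singleton, Submodule.mem_bot]

section Key

variable {R : Type*} [CommRing R] [IsNoetherianRing R]
variable {M : Type*} [AddCommGroup M] [Module R M]

/-- Any prime containing the annihilator of a finitely generated module over a
Noetherian ring contains an associated prime. -/
theorem exists_associatedPrime_le [Module.Finite R M] {q : Ideal R} (hq : q.IsPrime)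
    (hle : (⊤ : Submodule R M).annihilator ≤ q) :
    ∃ p ∈ associatedPrimes R M, p ≤ q := by
  classical
  -- the `q`-torsion submodule
  set N : Submodule R M :=
    { carrier := {m | ∃ t ∉ q, t • m = 0}
      zero_mem' := ⟨1, (Ideal.ne_top_iff_one q).mp hq.ne_top, smul_zero 1⟩
      add_mem' := by
        rintro a b ⟨t, ht, hta⟩ ⟨u, hu, hub⟩
        refine ⟨t * u, fun h => ((hq.mem_or_mem h).elim ht hu), ?_⟩
        have h1 : (t * u) • a = 0 := by rw [mul_comm, mul_smul, hta, smul_zero]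
        have h2 : (t * u) • b = 0 := by rw [mul_smul, hub, smul_zero]
        rw [smul_add, h1, h2, add_zero]
      smul_mem' := by
        rintro r m ⟨t, ht, htm⟩
        exact ⟨t, ht, by rw [smul_comm, htm, smul_zero]⟩ } with hN
  have memN : ∀ m : M, m ∈ N ↔ ∃ t ∉ q, t • m = 0 := fun m => Iff.rfl
  -- the quotient is nontrivial
  have hNt : N ≠ ⊤ := by
    intro hNtop
    obtain ⟨s, hs⟩ := Module.Finite.fg_top (R := R) (M := M)
    have hmem : ∀ m : M, ∃ t, t ∉ q ∧ t • m = 0 := by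
      intro m
      obtain ⟨t, ht, htm⟩ := (memN m).mp (hNtop ▸ Submodule.mem_top)
      exact ⟨t, ht, htm⟩
    choose t ht htm using hmem
    set T : R := ∏ m ∈ s, t m with hT
    have hTq : T ∉ q := by
      refine Finset.prod_induction t (· ∉ q)
        (fun a b ha hb h => ((hq.mem_or_mem h).elim ha hb))
        ((Ideal.ne_top_iff_one q).mp hq.ne_top) (fun m _ => ht m)
    have hTkill : ∀ m : M, T • m = 0 := by
      intro m
      have : (⊤ : Submodule R M) ≤ LinearMap.ker (LinearMap.lsmul R M T) := by
        rw [← hs, Submodule.span_le]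
        intro x hx
        have hx' : x ∈ s := hx
        have : T = t x * ∏ y ∈ s.erase x, t y := (Finset.mul_prod_erase s t hx').symm
        simp only [SetLike.mem_coe, LinearMap.mem_ker, LinearMap.lsmul_apply]
        rw [this, mul_comm, mul_smul, htm x, smul_zero]
      simpa using this Submodule.mem_top
    exact hTq (hle (Submodule.mem_annihilator.mpr fun m _ => hTkill m))
  haveI : Nontrivial (M ⧸ N) := Submodule.Quotient.nontrivial_iff.mpr hNt
  obtain ⟨p, hp⟩ := associatedPrimes.nonempty R (M ⧸ N)
  obtain ⟨hpprime, xb, hxb⟩ := isAssociatedPrime_iff.mp hp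
  rw [colon_bot_singleton_eq'] at hxb
  obtain ⟨x, rfl⟩ := Submodule.Quotient.mk_surjective N xb
  -- `x ∉ N`
  have hxN : x ∉ N := by
    intro hx
    have : (Submodule.Quotient.mk x : M ⧸ N) = 0 := (Submodule.Quotient.mk_eq_zero N).mpr hx
    rw [this] at hxb
    apply hpprime.ne_top
    rw [hxb, Submodule.span_zero_singleton, Submodule.annihilator_bot]
  have hmemp : ∀ r : R, r ∈ p ↔ (Submodule.Quotient.mk (r • x) : M ⧸ N) = 0 := by
    intro r
    rw [hxb, Submodule.mem_annihilator_span_singleton, ← Submodule.Quotient.mk_smul]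
  -- p ≤ q
  have hpq : p ≤ q := by
    intro r hr
    by_contra hrq
    obtain ⟨u, hu, hur⟩ := (Submodule.Quotient.mk_eq_zero N).mp ((hmemp r).mp hr)
    apply hxN
    refine (memN x).mpr ⟨u * r, fun h => ((hq.mem_or_mem h).elim hu hrq), ?_⟩
    rw [mul_smul]; exact hur
  -- p is an associated prime of M itself
  obtain ⟨F, hF⟩ : p.FG := IsNoetherian.noetherian p
  have hmemF : ∀ a : R, a ∈ F → ∃ u, u ∉ q ∧ u • (a • x) = 0 := by
    intro a ha
    have hap : a ∈ p := hF ▸ Submodule.subset_span ha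
    obtain ⟨u, hu, huax⟩ := (Submodule.Quotient.mk_eq_zero N).mp ((hmemp a).mp hap)
    exact ⟨u, hu, huax⟩
  choose! u hu huax using hmemF
  set T : R := ∏ a ∈ F, u a with hT
  have hTq : T ∉ q := by
    refine Finset.prod_induction u (· ∉ q)
      (fun a b ha hb h => ((hq.mem_or_mem h).elim ha hb))
      ((Ideal.ne_top_iff_one q).mp hq.ne_top) (fun a ha => hu a ha)
  refine ⟨p, isAssociatedPrime_iff.mpr ⟨hpprime, T • x, ?_⟩, hpq⟩
  rw [colon_bot_singleton_eq']
  refine le_antisymm ?_ ?_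
  · -- p ≤ ann (R ∙ T • x)
    intro r hr
    rw [Submodule.mem_annihilator_span_singleton]
    have : p ≤ LinearMap.ker ((LinearMap.lsmul R M).flip (T • x)) := by
      rw [← hF]
      refine Ideal.span_le.mpr ?_
      intro a ha
      simp only [SetLike.mem_coe, LinearMap.mem_ker, LinearMap.flip_apply, LinearMap.lsmul_apply]
      have hTe : T = u a * ∏ b ∈ F.erase a, u b := (Finset.mul_prod_erase F u ha).symm
      rw [smul_comm, hTe, mul_comm, mul_smul, huax a ha, smul_zero]
    have h := this hr
    simp only [LinearMap.mem_ker, LinearMap.flip_apply, LinearMap.lsmul_apply] at h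
    exact h
  · -- ann (R ∙ T • x) ≤ p
    intro r hr
    rw [Submodule.mem_annihilator_span_singleton] at hr
    rw [hmemp, Submodule.Quotient.mk_eq_zero]
    refine (memN _).mpr ⟨T, hTq, ?_⟩
    rw [smul_comm]; exact hr

end Key


section Main

variable {R : Type*} [CommRing R] {S : Subring R}

theorem NOver.of_quot_le {p q : Ideal R} (hpq : p ≤ q) (h : NOver S (R ⧸ p)) :
    NOver S (R ⧸ q) := by
  refine h.of_surjective (Submodule.mapQ p q LinearMap.id hpq) ?_
  intro z
  obtain ⟨x, rfl⟩ := Submodule.Quotient.mk_surjective q z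
  exact ⟨Submodule.Quotient.mk x, by rw [Submodule.mapQ_apply, LinearMap.id_apply]⟩

theorem nover_iff_associatedPrimes [IsNoetherianRing R] {M : Type*} [AddCommGroup M]
    [Module R M] [IsNoetherian R M] :
    NOver S M ↔ ∀ p ∈ associatedPrimes R M, NOver S (R ⧸ p) := by
  constructor
  · intro h p hp
    obtain ⟨hprime, x, hx⟩ := isAssociatedPrime_iff.mp hp
    rw [colon_bot_singleton_eq'] at hx
    have hker : p ≤ LinearMap.ker (LinearMap.toSpanSingleton R M x) := by
      intro r hr
      rw [LinearMap.mem_ker, LinearMap.toSpanSingleton_apply]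
      exact (Submodule.mem_annihilator_span_singleton _ _).mp (hx ▸ hr)
    refine h.of_injective (Submodule.liftQ p (LinearMap.toSpanSingleton R M x) hker) ?_
    rw [← LinearMap.ker_eq_bot]
    refine Submodule.ker_liftQ_eq_bot p _ hker ?_
    intro r hr
    rw [LinearMap.mem_ker, LinearMap.toSpanSingleton_apply] at hr
    rw [hx]
    exact (Submodule.mem_annihilator_span_singleton _ _).mpr hr
  · intro H
    have main : ∀ N : Submodule R M, NOver S (M ⧸ N) := by
      intro N
      induction N using IsNoetherian.induction with
      | _ N ih =>
        by_cases hN : N = ⊤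
        · subst hN
          haveI : Subsingleton (M ⧸ (⊤ : Submodule R M)) :=
            Submodule.Quotient.subsingleton_iff.mpr rfl
          show IsNoetherian S (M ⧸ (⊤ : Submodule R M))
          haveI : Subsingleton (Submodule S (M ⧸ (⊤ : Submodule R M))) :=
            (Submodule.subsingleton_iff S).mpr inferInstance
          haveI : Finite (Submodule S (M ⧸ (⊤ : Submodule R M))) := Finite.of_subsingleton
          exact isNoetherian_mk Finite.to_wellFoundedGT
        · haveI : Nontrivial (M ⧸ N) :=
            Submodule.Quotient.nontrivial_iff.mpr hN
          obtain ⟨p, hp⟩ := associatedPrimes.nonempty R (M ⧸ N)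
          obtain ⟨hpprime, xb, hxb⟩ := isAssociatedPrime_iff.mp hp
          rw [colon_bot_singleton_eq'] at hxb
          obtain ⟨x, rfl⟩ := Submodule.Quotient.mk_surjective N xb
          have hxN : x ∉ N := by
            intro hx
            have h0 : (Submodule.Quotient.mk x : M ⧸ N) = 0 :=
              (Submodule.Quotient.mk_eq_zero N).mpr hx
            rw [h0] at hxb
            exact hpprime.ne_top (by
              rw [hxb, Submodule.span_zero_singleton, Submodule.annihilator_bot])
          -- `R ⧸ p` is `S`-Noetherian
          have hRp : NOver S (R ⧸ p) := by
            have hle : (⊤ : Submodule R M).annihilator ≤ p := by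
              intro r hr
              rw [hxb, Submodule.mem_annihilator_span_singleton, ← Submodule.Quotient.mk_smul,
                Submodule.Quotient.mk_eq_zero]
              have : r • x = 0 := Submodule.mem_annihilator.mp hr x Submodule.mem_top
              rw [this]; exact N.zero_mem
            obtain ⟨p', hp', hp'le⟩ := exists_associatedPrime_le hpprime hle
            exact (H p' hp').of_quot_le hp'le
          -- the cyclic submodule generated by `mk x`
          set φ : R →ₗ[R] M ⧸ N := LinearMap.toSpanSingleton R (M ⧸ N) (Submodule.Quotient.mk x)
            with hφ
          have hkerφ : p ≤ LinearMap.ker φ := by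
            intro r hr
            rw [LinearMap.mem_ker, hφ, LinearMap.toSpanSingleton_apply]
            exact (Submodule.mem_annihilator_span_singleton _ _).mp (hxb ▸ hr)
          set φb : R ⧸ p →ₗ[R] M ⧸ N := Submodule.liftQ p φ hkerφ with hφb
          have h1 : NOver S (LinearMap.range φb) :=
            hRp.of_surjective φb.rangeRestrict φb.surjective_rangeRestrict
          set J : Submodule R M := N ⊔ (Submodule.span R {x}) with hJ
          have hNJ : N < J := by
            refine lt_of_le_of_ne le_sup_left ?_
            intro hEq
            exact hxN (hEq ▸ (Submodule.mem_sup_right (Submodule.mem_span_singleton_self x)))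
          have hmap : Submodule.map N.mkQ J = LinearMap.range φb := by
            rw [hJ, Submodule.map_sup, Submodule.range_liftQ]
            have e1 : Submodule.map N.mkQ N = ⊥ := by
              rw [eq_bot_iff, Submodule.map_le_iff_le_comap]
              intro y hy
              simpa [Submodule.Quotient.mk_eq_zero] using hy
            have e2 : Submodule.map N.mkQ (Submodule.span R {x}) =
                Submodule.span R {(Submodule.Quotient.mk x : M ⧸ N)} := by
              rw [Submodule.map_span, Set.image_singleton]; rfl
            rw [e1, e2, bot_sup_eq, hφ, LinearMap.span_singleton_eq_range]
          have h1' : NOver S (Submodule.map N.mkQ J) := by rw [hmap]; exact h1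
          have h2 : NOver S ((M ⧸ N) ⧸ Submodule.map N.mkQ J) := by
            have e := Submodule.quotientQuotientEquivQuotient N J le_sup_left
            exact (ih J hNJ).of_injective e.toLinearMap e.injective
          exact NOver.of_sub_quot (Submodule.map N.mkQ J) h1' h2
    refine (main ⊥).of_injective (⊥ : Submodule R M).mkQ ?_
    rw [← LinearMap.ker_eq_bot, Submodule.ker_mkQ]

end Main

instance laurentNoetherian (d : ℕ) : IsNoetherianRing (LaurentRing d) := by
  haveI : AddGroup.FG (Fin d → ℤ) := Module.Finite.iff_addGroup_fg.mp inferInstance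
  haveI : AddMonoid.FG (Fin d → ℤ) := AddGroup.fg_iff_addMonoid_fg.mp inferInstance
  exact Algebra.FiniteType.isNoetherianRing ℤ (LaurentRing d)


/-- Let `M` be a Noetherian `R_d`-module and `H = H_v` a half-space in
`ℝ^d`.  Then `M` is `R_H`-Noetherian if and only if `R_d/p` is `R_H`-Noetherian for
every associated prime `p ∈ asc(M)`. -/
theorem noetherianOver_iff_associated_primes {d : ℕ} (M : Type*) [AddCommGroup M]
    [Module (LaurentRing d) M] [IsNoetherian (LaurentRing d) M]
    (v : Rspace d) (hv : ‖v‖ = 1) :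
    NoetherianOver (RH v) M ↔
      ∀ p ∈ associatedPrimes (LaurentRing d) M,
        NoetherianOver (RH v) (LaurentRing d ⧸ p) := nover_iff_associatedPrimes (S := RH v)
end
end

section
/- Let M be a Noetherian R_d-module, let v ∈ S^{d−1}, let H = H_v be the corresponding half-space, and let k ∈ ℤ^d with k ∉ H (i.e. k·v > 0). Then M is R_H-Noetherian if and only if there exists f ∈ R_H such that the Laurent polynomial u^k − f annihilates M. -/
open scoped RealInnerProductSpace

noncomputable section

section Aux

variable {d : ℕ}

lemma mono_mul (m n : Fin d → ℤ) : mono m * mono n = mono (m + n) := by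
  simp [mono, AddMonoidAlgebra.single_mul_single]

lemma mono_pow (n : Fin d → ℤ) (j : ℕ) : (mono n) ^ j = mono ((j : ℤ) • n) := by
  simp [mono, AddMonoidAlgebra.single_pow, natCast_zsmul]

lemma mono_zero : mono (0 : Fin d → ℤ) = 1 := rfl

lemma intVec_inner_zsmul (v : Rspace d) (c : ℤ) (n : Fin d → ℤ) :
    ⟪intVec (c • n), v⟫ = c * ⟪intVec n, v⟫ := by
  have h : intVec (c • n) = (c : ℝ) • intVec n := by
    ext i
    simp only [intVec, PiLp.toLp_apply, Pi.smul_apply, smul_eq_mul, PiLp.smul_apply]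
    push_cast; ring
  rw [h, real_inner_smul_left]

lemma intVec_inner_sub_zsmul (v : Rspace d) (c : ℤ) (n m : Fin d → ℤ) :
    ⟪intVec (n - c • m), v⟫ = ⟪intVec n, v⟫ - c * ⟪intVec m, v⟫ := by
  have h : intVec (n - c • m) = intVec n - (c : ℝ) • intVec m := by
    ext i
    simp only [intVec, PiLp.toLp_apply, Pi.smul_apply, smul_eq_mul, PiLp.smul_apply, Pi.sub_apply, PiLp.sub_apply]
    push_cast; ring
  rw [h, inner_sub_left, real_inner_smul_left]

lemma mono_mem_RH {v : Rspace d} {n : Fin d → ℤ} (h : ⟪intVec n, v⟫ ≤ 0) :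
    mono n ∈ RH v :=
  Subring.subset_closure ⟨n, h, rfl⟩

end Aux

set_option synthInstance.maxHeartbeats 1000000 in
set_option maxHeartbeats 1000000 in
/-- Let `M` be a Noetherian `R_d`-module, `v ∈ S^{d-1}`, `H = H_v` the
corresponding half-space, and `k ∈ ℤ^d` with `k ∉ H` (i.e. `k·v > 0`).  Then `M` is
`R_H`-Noetherian if and only if there is an `f ∈ R_H` such that the Laurent polynomial
`u^k - f` annihilates `M`. -/
theorem noetherianOver_iff_annihilating_polynomial {d : ℕ} (M : Type*) [AddCommGroup M]
    [Module (LaurentRing d) M] [IsNoetherian (LaurentRing d) M]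
    (v : Rspace d) (hv : ‖v‖ = 1) (k : Fin d → ℤ) (hk : 0 < ⟪intVec k, v⟫) :
    NoetherianOver (RH v) M ↔
      ∃ f ∈ RH v, ∀ m : M, (mono k - f) • m = 0 := by
  letI instS : Module (RH v) M := Module.compHom M (RH v).subtype
  have hsmul : ∀ (s : RH v) (m : M), s • m = (s : LaurentRing d) • m := fun s m => rfl
  constructor
  · intro h
    haveI : IsNoetherian (RH v) M := h
    haveI : Module.Finite (RH v) M := Module.finite_def.mpr (IsNoetherian.noetherian ⊤)
    let φ : Module.End (RH v) M :=
      { toFun := fun m => mono k • m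
        map_add' := fun a b => smul_add _ a b
        map_smul' := fun s m => by
          show mono k • ((s : LaurentRing d) • m) = (s : LaurentRing d) • (mono k • m)
          rw [← mul_smul, ← mul_smul, mul_comm] }
    obtain ⟨p, pmonic, hp0⟩ := Algebra.IsIntegral.isIntegral (R := RH v) φ
    have hpowact : ∀ (j : ℕ) (m : M), (mono k) ^ j • m = (φ ^ j) m := by
      intro j
      induction j with
      | zero => intro m; simp
      | succ j ih =>
        intro m
        rw [pow_succ, pow_succ, mul_smul, Module.End.mul_apply]
        exact ih (φ m)
    have heval : ∀ (q : Polynomial (RH v)) (m : M),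
        Polynomial.eval₂ (RH v).subtype (mono k) q • m
          = Polynomial.eval₂ (algebraMap (RH v) (Module.End (RH v) M)) φ q m := by
      intro q
      induction q using Polynomial.induction_on' with
      | add p q hp hq =>
        intro m
        rw [Polynomial.eval₂_add, Polynomial.eval₂_add, add_smul, LinearMap.add_apply, hp, hq]
      | monomial i a =>
        intro m
        rw [Polynomial.eval₂_monomial, Polynomial.eval₂_monomial, mul_smul, hpowact,
          Module.End.mul_apply, Module.algebraMap_end_apply]
        exact (hsmul a ((φ ^ i) m)).symm
    have hann : ∀ m : M, Polynomial.eval₂ (RH v).subtype (mono k) p • m = 0 := by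
      intro m
      rw [heval, hp0, LinearMap.zero_apply]
    set r := p.natDegree with hr
    refine ⟨- ∑ j ∈ Finset.range r,
        ((RH v).subtype (p.coeff j)) * mono (((j : ℤ) + 1 - (r : ℤ)) • k), ?_, ?_⟩
    · refine neg_mem (Subring.sum_mem _ fun j hj => Subring.mul_mem _ (p.coeff j).2
        (mono_mem_RH ?_))
      rw [intVec_inner_zsmul]
      have hjr : j < r := Finset.mem_range.mp hj
      have hc : (j : ℤ) + 1 - (r : ℤ) ≤ 0 := by omega
      have hc' : (((j : ℤ) + 1 - (r : ℤ) : ℤ) : ℝ) ≤ 0 := by exact_mod_cast hc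
      nlinarith [hk.le, hc']
    · intro m
      have hterm : ∀ (c : LaurentRing d) (i : ℕ),
          mono (((1 : ℤ) - (r : ℤ)) • k) * (c * (mono k) ^ i)
            = c * mono (((i : ℤ) + 1 - (r : ℤ)) • k) := by
        intro c i
        rw [mono_pow, mul_left_comm, mono_mul, ← add_smul]
        have : (1 - (r : ℤ)) + (i : ℤ) = (i : ℤ) + 1 - (r : ℤ) := by ring
        rw [this]
      have key : mono k - (- ∑ j ∈ Finset.range r,
            ((RH v).subtype (p.coeff j)) * mono (((j : ℤ) + 1 - (r : ℤ)) • k))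
          = mono (((1 : ℤ) - (r : ℤ)) • k) * Polynomial.eval₂ (RH v).subtype (mono k) p := by
        rw [Polynomial.eval₂_eq_sum_range, Finset.mul_sum]
        simp only [hterm]
        rw [← hr, Finset.sum_range_succ]
        have hcr : p.coeff r = 1 := pmonic.coeff_natDegree
        rw [hcr]
        have h1 : ((r : ℤ) + 1 - (r : ℤ)) = 1 := by ring
        rw [h1, one_smul, map_one, one_mul]
        ring
      rw [key, mul_smul, hann, smul_zero]
  · rintro ⟨f, hfS, hf⟩
    have hK : ∀ m : M, mono k • m = f • m := by
      intro m
      have := hf m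
      rwa [sub_smul, sub_eq_zero] at this
    have hpow : ∀ (j : ℕ) (m : M), mono ((j : ℤ) • k) • m = f ^ j • m := by
      intro j
      induction j with
      | zero => intro m; simp [mono_zero]
      | succ j ih =>
        intro m
        have hc : ((j + 1 : ℕ) : ℤ) • k = (j : ℤ) • k + k := by
          push_cast
          rw [add_smul, one_smul]
        rw [hc, ← mono_mul, mul_smul, hK, ← mul_smul, mul_comm, mul_smul, ih, ← mul_smul,
          ← pow_succ']
    have hmonoN : ∀ (N : Submodule (RH v) M) (n : Fin d → ℤ) (x : M),
        x ∈ N → mono n • x ∈ N := by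
      intro N n x hx
      obtain ⟨j, hj⟩ := exists_nat_ge (⟪intVec n, v⟫ / ⟪intVec k, v⟫)
      have hle : ⟪intVec (n - (j : ℤ) • k), v⟫ ≤ 0 := by
        rw [intVec_inner_sub_zsmul]
        have h2 := (div_le_iff₀ hk).mp hj
        push_cast at h2 ⊢
        linarith
      have hg : mono (n - (j : ℤ) • k) * f ^ j ∈ RH v :=
        mul_mem (mono_mem_RH hle) (pow_mem hfS j)
      have heq : mono n • x = (⟨_, hg⟩ : RH v) • x := by
        rw [hsmul]
        show mono n • x = (mono (n - (j : ℤ) • k) * f ^ j) • x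
        have hcan : n - (j : ℤ) • k + (j : ℤ) • k = n := by funext i; simp
        rw [mul_smul, ← hpow, ← mul_smul, mono_mul, hcan]
      rw [heq]
      exact N.smul_mem _ hx
    have hstab : ∀ (N : Submodule (RH v) M) (g : LaurentRing d) (x : M),
        x ∈ N → g • x ∈ N := by
      intro N g
      induction g using AddMonoidAlgebra.induction_on with
      | of n =>
        intro x hx
        have : AddMonoidAlgebra.of ℤ (Fin d → ℤ) (Multiplicative.ofAdd n) = mono n := rfl
        rw [this]
        exact hmonoN N n x hx
      | add g1 g2 h1 h2 =>
        intro x hx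
        rw [add_smul]
        exact N.add_mem (h1 x hx) (h2 x hx)
      | smul r g hg =>
        intro x hx
        rw [zsmul_eq_mul, mul_smul]
        have : ((r : LaurentRing d)) • (g • x) = r • (g • x) := Int.cast_smul_eq_zsmul _ r _
        rw [this]
        exact N.toAddSubgroup.zsmul_mem (hg x hx) r
    have wfd := isNoetherian_iff.mp (inferInstance : IsNoetherian (LaurentRing d) M)
    let F : Submodule (RH v) M → Submodule (LaurentRing d) M := fun N =>
      { carrier := N
        add_mem' := fun h1 h2 => N.add_mem h1 h2
        zero_mem' := N.zero_mem
        smul_mem' := fun g {x} hx => hstab N g x hx }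
    have hFle : ∀ {a b : Submodule (RH v) M}, F a ≤ F b ↔ a ≤ b :=
      fun {a b} => ⟨fun h x hx => h hx, fun h x hx => h hx⟩
    have hFlt : ∀ {a b : Submodule (RH v) M}, F a < F b ↔ a < b := by
      intro a b
      rw [lt_iff_le_not_ge, lt_iff_le_not_ge, hFle, hFle]
    have hinj : Function.Injective F := by
      intro a b hab
      apply SetLike.ext
      intro x
      constructor
      · intro hx
        have : x ∈ F a := hx
        rw [hab] at this
        exact this
      · intro hx
        have : x ∈ F b := hx
        rw [← hab] at this
        exact this
    let e : ((· > ·) : Submodule (RH v) M → Submodule (RH v) M → Prop) ↪r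
        ((· > ·) : Submodule (LaurentRing d) M → Submodule (LaurentRing d) M → Prop) :=
      RelEmbedding.mk ⟨F, hinj⟩ (fun {a b} => hFlt)
    have wf : WellFounded ((· > ·) : Submodule (RH v) M → Submodule (RH v) M → Prop) :=
      e.wellFounded wfd
    exact isNoetherian_mk ⟨wf⟩
end
end

section
/- Let α be an algebraic ℤ^d-action on a compact metrizable abelian group X, let Y be a closed α-invariant subgroup of X, and let H be a half-space in ℝ^d. If the restricted action α_Y on Y and the induced action α_{X/Y} on X/Y are both expansive along H, then α is expansive along H. -/
open scoped RealInnerProductSpace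

noncomputable section

/-- `ρ` is a translation-invariant metric on the topological abelian group `X`
inducing its topology. -/
structure IsCompatibleInvariantMetric (X : Type*) [TopologicalSpace X] [AddCommGroup X]
    (ρ : X → X → ℝ) : Prop where
  symm : ∀ x y, ρ x y = ρ y x
  eq_iff : ∀ x y, ρ x y = 0 ↔ x = y
  triangle : ∀ x y z, ρ x z ≤ ρ x y + ρ y z
  invariant : ∀ a x y, ρ (a + x) (a + y) = ρ x y
  compatible : ∀ s : Set X, IsOpen s ↔ ∀ x ∈ s, ∃ ε > 0, {y | ρ x y < ε} ⊆ s

/-- Let `α` be an algebraic `ℤ^d`-action on a compact metrizable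
abelian group `X` (with compatible translation-invariant metric `ρ`), let `Y` be a
closed `α`-invariant subgroup of `X`, and let `H = H_v` be a half-space in `ℝ^d`.  If
the restricted action `α_Y` on `Y` and the induced action `α_{X/Y}` on `X/Y` (whose
compact quotient topology is induced by a compatible translation-invariant metric
`ρq`) are both expansive along `H`, then `α` is expansive along `H`. -/
theorem expansive_half_of_subgroup_and_quotient {d : ℕ} (hd : 1 ≤ d)
    {X : Type*} [TopologicalSpace X] [CompactSpace X] [AddCommGroup X]
    [IsTopologicalAddGroup X]
    (ρ : X → X → ℝ) (hρ : IsCompatibleInvariantMetric X ρ)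
    (α : (Fin d → ℤ) → X ≃+ X) (hcont : ∀ n, Continuous (α n))
    (hα : ∀ m n : Fin d → ℤ, ∀ x : X, α (m + n) x = α m (α n x))
    (hα0 : ∀ x : X, α 0 x = x)
    (Y : AddSubgroup X) (hYclosed : IsClosed (Y : Set X))
    (hYinv : ∀ n : Fin d → ℤ, (α n) '' (Y : Set X) = (Y : Set X))
    (v : Rspace d) (hv : ‖v‖ = 1)
    (ρq : X ⧸ Y → X ⧸ Y → ℝ) (hρq : IsCompatibleInvariantMetric (X ⧸ Y) ρq)
    (hYexp : ∃ ε > 0, ∀ x ∈ Y, ∀ y ∈ Y,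
      (∀ n : Fin d → ℤ, ⟪intVec n, v⟫ ≤ 0 → ρ (α n x) (α n y) ≤ ε) → x = y)
    (hQexp : ∃ ε > 0, ∀ x y : X,
      (∀ n : Fin d → ℤ, ⟪intVec n, v⟫ ≤ 0 →
        ρq (QuotientAddGroup.mk (α n x)) (QuotientAddGroup.mk (α n y)) ≤ ε) →
      (QuotientAddGroup.mk x : X ⧸ Y) = QuotientAddGroup.mk y) :
    ∃ ε > 0, ∀ x y : X,
      (∀ n : Fin d → ℤ, ⟪intVec n, v⟫ ≤ 0 → ρ (α n x) (α n y) ≤ ε) → x = y := by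
  obtain ⟨ε₁, hε₁, hY⟩ := hYexp
  obtain ⟨ε₂, hε₂, hQ⟩ := hQexp
  -- The ε₂-ball around 0 in the quotient is open
  have hopen : IsOpen {q : X ⧸ Y | ρq 0 q < ε₂} := by
    rw [hρq.compatible]
    intro x hx
    refine ⟨ε₂ - ρq 0 x, by simpa using hx, fun y hy => ?_⟩
    have := hρq.triangle 0 x y
    simp only [Set.mem_setOf_eq] at hy ⊢
    linarith
  have hcontm : Continuous (QuotientAddGroup.mk : X → X ⧸ Y) := continuous_quot_mk
  have h0mem : (0 : X) ∈ (QuotientAddGroup.mk : X → X ⧸ Y) ⁻¹' {q | ρq 0 q < ε₂} := by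
    simp only [Set.mem_preimage, Set.mem_setOf_eq]
    have : QuotientAddGroup.mk (0 : X) = (0 : X ⧸ Y) := rfl
    rw [this, (hρq.eq_iff 0 0).mpr rfl]
    exact hε₂
  obtain ⟨δ, hδ, hball⟩ := (hρ.compatible _).mp (hopen.preimage hcontm) 0 h0mem
  refine ⟨min ε₁ (δ / 2), lt_min hε₁ (by linarith), fun x y hxy => ?_⟩
  -- distances simplify via invariance
  have key : ∀ n : Fin d → ℤ, ρ 0 (α n y - α n x) = ρ (α n x) (α n y) := by
    intro n
    have := hρ.invariant (α n x) 0 (α n y - α n x)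
    simpa using this.symm
  -- Step 1: the quotient points agree
  have hq : (QuotientAddGroup.mk x : X ⧸ Y) = QuotientAddGroup.mk y := by
    refine hQ x y fun n hn => ?_
    have h1 : ρ 0 (α n y - α n x) < δ := by
      rw [key n]
      calc ρ (α n x) (α n y) ≤ min ε₁ (δ / 2) := hxy n hn
        _ ≤ δ / 2 := min_le_right _ _
        _ < δ := by linarith
    have h2 := hball h1
    simp only [Set.mem_preimage, Set.mem_setOf_eq] at h2
    have h3 : ρq (QuotientAddGroup.mk (α n x)) (QuotientAddGroup.mk (α n y))
        = ρq 0 (QuotientAddGroup.mk (α n y - α n x)) := by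
      have := hρq.invariant (QuotientAddGroup.mk (α n x)) 0
        (QuotientAddGroup.mk (α n y - α n x))
      have hadd : (QuotientAddGroup.mk (α n x) : X ⧸ Y)
          + QuotientAddGroup.mk (α n y - α n x) = QuotientAddGroup.mk (α n y) := by
        rw [← QuotientAddGroup.mk_add]
        congr 1
        abel
      rw [add_zero, hadd] at this
      exact this
    rw [h3]
    exact le_of_lt h2
  -- Step 2: y - x ∈ Y
  have hmem : y - x ∈ Y := by
    have := (QuotientAddGroup.eq (s := Y) (a := x) (b := y)).mp hq
    simpa [neg_add_eq_sub] using this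
  -- Step 3: apply expansiveness on Y to y - x and 0
  have hz : y - x = (0 : X) := by
    refine hY (y - x) hmem 0 Y.zero_mem fun n hn => ?_
    have hsub : α n (y - x) = α n y - α n x := map_sub (α n) y x
    have h0 : α n (0 : X) = 0 := map_zero (α n)
    rw [hsub, h0]
    have : ρ (α n y - α n x) 0 = ρ (α n x) (α n y) := by
      rw [hρ.symm, key n]
    rw [this]
    calc ρ (α n x) (α n y) ≤ min ε₁ (δ / 2) := hxy n hn
      _ ≤ ε₁ := min_le_left _ _
  have : y = x := by
    have := sub_eq_zero.mp hz
    exact this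
  exact this.symm
end
end

section
/- Let M be a Noetherian R_d-module and let min(M) denote the set of minimal elements of asc(M) with respect to inclusion. Then N^n(α_M) = ⋃_{p ∈ min(M)} N^n(α_{R_d/p}), N^v(α_M) = ⋃_{p ∈ min(M)} N^v(α_{R_d/p}), and consequently N(α_M) = ⋃_{p ∈ min(M)} ( N^n(α_{R_d/p}) ∪ N^v(α_{R_d/p}) ). -/
open scoped RealInnerProductSpace

noncomputable section

/-- Evaluation of a Laurent polynomial at a point `z ∈ (ℂ∖{0})^d`. -/
def laurentEval {d : ℕ} (z : Fin d → ℂ) (f : LaurentRing d) : ℂ :=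
  ∑ n ∈ f.coeff.support, (f.coeff n : ℂ) * ∏ i, z i ^ (n i)

/-- `log|V(a)| ⊆ ℝ^d`, the logarithmic image of the variety
`V(a) = {z ∈ (ℂ∖{0})^d : f(z) = 0 for all f ∈ a}`. -/
def logVariety {d : ℕ} (a : Ideal (LaurentRing d)) : Set (Rspace d) :=
  {x | ∃ z : Fin d → ℂ, (∀ i, z i ≠ 0) ∧ (∀ f ∈ a, laurentEval z f = 0) ∧
        ∀ i, x i = Real.log ‖z i‖}

/-- The non-Noetherian part `N^n(α_{R_d/a})` of the nonexpansive set: the set of unit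
vectors `v ∈ S^{d-1}` such that `R_d/a` is not `R_{H_v}`-Noetherian. -/
def Nn {d : ℕ} (a : Ideal (LaurentRing d)) : Set (Metric.sphere (0 : Rspace d) 1) :=
  {v | ¬ NoetherianOver (RH (v : Rspace d)) (LaurentRing d ⧸ a)}

/-- The variety part `N^v(α_{R_d/a})` of the nonexpansive set: the set of unit vectors
`v ∈ S^{d-1}` such that the ray `[0,∞)v` meets `log|V(a)|`. -/
def Nv {d : ℕ} (a : Ideal (LaurentRing d)) : Set (Metric.sphere (0 : Rspace d) 1) :=
  {v | ∃ t : ℝ, 0 ≤ t ∧ t • (v : Rspace d) ∈ logVariety a}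

/-- `N^n(α_M) = ⋃_{p ∈ asc(M)} N^n(α_{R_d/p})` for an `R_d`-module `M`. -/
def NnM (d : ℕ) (M : Type*) [AddCommGroup M] [Module (LaurentRing d) M] :
    Set (Metric.sphere (0 : Rspace d) 1) :=
  ⋃ p ∈ associatedPrimes (LaurentRing d) M, Nn p

/-- `N^v(α_M) = ⋃_{p ∈ asc(M)} N^v(α_{R_d/p})` for an `R_d`-module `M`. -/
def NvM (d : ℕ) (M : Type*) [AddCommGroup M] [Module (LaurentRing d) M] :
    Set (Metric.sphere (0 : Rspace d) 1) :=
  ⋃ p ∈ associatedPrimes (LaurentRing d) M, Nv p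

/-- The set `min(M)` of minimal elements of `asc(M)` with respect to inclusion. -/
def minAssocPrimes (d : ℕ) (M : Type*) [AddCommGroup M] [Module (LaurentRing d) M] :
    Set (Ideal (LaurentRing d)) :=
  {q ∈ associatedPrimes (LaurentRing d) M |
    ∀ r ∈ associatedPrimes (LaurentRing d) M, r ≤ q → r = q}


section Aux
variable {R : Type*} [CommRing R] {M : Type*} [AddCommGroup M] [Module R M]

lemma aux_ker_toSpanSingleton (x : M) :
    LinearMap.ker (LinearMap.toSpanSingleton R M x) = (R ∙ x).annihilator := by
  ext r
  simp [LinearMap.mem_ker, Submodule.mem_annihilator_span_singleton,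
    LinearMap.toSpanSingleton_apply]

lemma aux_assoc_span_singleton [IsNoetherianRing R] (x : M)
    (hp : ((R ∙ x).annihilator).IsPrime) :
    associatedPrimes R ↥(R ∙ x) = {(R ∙ x).annihilator} := by
  have e1 : (R ⧸ LinearMap.ker (LinearMap.toSpanSingleton R M x)) ≃ₗ[R] ↥(R ∙ x) :=
    (LinearMap.quotKerEquivRange _).trans
      (LinearEquiv.ofEq _ _ (LinearMap.span_singleton_eq_range R M x).symm)
  rw [← LinearEquiv.AssociatedPrimes.eq e1, aux_ker_toSpanSingleton,
    associatedPrimes.eq_singleton_of_isPrimary hp.isPrimary, hp.radical]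

lemma aux_colon_bot_eq (x : M) : (⊥ : Submodule R M).colon {x} = (R ∙ x).annihilator := by
  ext r
  rw [Submodule.mem_colon_singleton, Submodule.mem_bot, Submodule.mem_annihilator_span_singleton]

lemma aux_assoc_subset_union [IsNoetherianRing R] (N : Submodule R M) :
    associatedPrimes R M ⊆ associatedPrimes R N ∪ associatedPrimes R (M ⧸ N) := by
  intro p hp'
  obtain ⟨hp, x, rfl⟩ := isAssociatedPrime_iff.mp hp'
  rw [aux_colon_bot_eq] at hp ⊢
  by_cases h : ∀ a : R, a • x ∈ N → a • x = 0
  · right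
    refine isAssociatedPrime_iff.mpr ⟨hp, N.mkQ x, ?_⟩
    rw [aux_colon_bot_eq]
    ext r
    rw [Submodule.mem_annihilator_span_singleton, Submodule.mem_annihilator_span_singleton,
      ← map_smul, Submodule.mkQ_apply, Submodule.Quotient.mk_eq_zero]
    exact ⟨fun hr => hr ▸ N.zero_mem, h r⟩
  · left
    push_neg at h
    obtain ⟨a, hmem, hne⟩ := h
    refine isAssociatedPrime_iff.mpr ⟨hp, ⟨a • x, hmem⟩, ?_⟩
    rw [aux_colon_bot_eq]
    ext r
    rw [Submodule.mem_annihilator_span_singleton, Submodule.mem_annihilator_span_singleton]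
    have hcoe : ((r • (⟨a • x, hmem⟩ : N) : N) : M) = (r * a) • x := by
      simp [smul_smul]
    constructor
    · intro hr
      rw [← Subtype.coe_inj, hcoe, ZeroMemClass.coe_zero, mul_comm, mul_smul, hr, smul_zero]
    · intro hr
      rw [← Subtype.coe_inj, hcoe, ZeroMemClass.coe_zero] at hr
      have : r * a ∈ (R ∙ x).annihilator :=
        (Submodule.mem_annihilator_span_singleton _ _).mpr hr
      rcases hp.mem_or_mem this with h1 | h2
      · exact (Submodule.mem_annihilator_span_singleton _ _).mp h1
      · exact absurd ((Submodule.mem_annihilator_span_singleton _ _).mp h2) hne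

theorem aux_associatedPrimes_finite (R M : Type*) [CommRing R] [IsNoetherianRing R]
    [AddCommGroup M] [Module R M] [IsNoetherian R M] :
    (associatedPrimes R M).Finite := by
  have key : ∀ N : Submodule R M, (associatedPrimes R (M ⧸ N)).Finite := by
    intro N
    induction N using IsNoetherian.induction with
    | _ N ih =>
      by_cases hN : Subsingleton (M ⧸ N)
      · rw [associatedPrimes.eq_empty_of_subsingleton]
        exact Set.finite_empty
      have : Nontrivial (M ⧸ N) := not_subsingleton_iff_nontrivial.mp hN
      obtain ⟨p, hp0⟩ := associatedPrimes.nonempty R (M ⧸ N)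
      obtain ⟨hprime, xbar, hx⟩ := isAssociatedPrime_iff.mp hp0
      rw [aux_colon_bot_eq] at hx
      obtain ⟨x, rfl⟩ := N.mkQ_surjective xbar
      have hxN : x ∉ N := by
        intro hmem
        apply hprime.ne_top
        rw [hx, Submodule.span_singleton_eq_bot.mpr
          (by rwa [Submodule.mkQ_apply, Submodule.Quotient.mk_eq_zero]),
          Submodule.annihilator_bot]
      have hle : N ≤ N ⊔ (R ∙ x) := le_sup_left
      have hlt : N < N ⊔ (R ∙ x) := by
        refine lt_of_le_of_ne hle fun hEq => hxN ?_
        rw [hEq]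
        exact (le_sup_right : (R ∙ x) ≤ _) (Submodule.mem_span_singleton_self x)
      have hmapN : N.map N.mkQ = ⊥ := by
        refine le_bot_iff.mp (Submodule.map_le_iff_le_comap.mpr ?_)
        rw [Submodule.comap_bot, Submodule.ker_mkQ]
      have hmap : (N ⊔ (R ∙ x)).map N.mkQ = (R ∙ N.mkQ x) := by
        rw [Submodule.map_sup, hmapN, bot_sup_eq, Submodule.map_span, Set.image_singleton]
      have hsub := aux_assoc_subset_union (R := R) (M := M ⧸ N) ((N ⊔ (R ∙ x)).map N.mkQ)
      have h1 : (associatedPrimes R ↥((N ⊔ (R ∙ x)).map N.mkQ)).Finite := by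
        rw [hmap, aux_assoc_span_singleton (N.mkQ x) (hx ▸ hprime)]
        exact Set.finite_singleton _
      have h2 : (associatedPrimes R ((M ⧸ N) ⧸ (N ⊔ (R ∙ x)).map N.mkQ)).Finite := by
        rw [LinearEquiv.AssociatedPrimes.eq (Submodule.quotientQuotientEquivQuotient N _ hle)]
        exact ih _ hlt
      exact ((h1.union h2).subset hsub)
  have e : (M ⧸ (⊥ : Submodule R M)) ≃ₗ[R] M := Submodule.quotEquivOfEqBot _ rfl
  rw [← LinearEquiv.AssociatedPrimes.eq e]
  exact key ⊥

lemma aux_exists_min_le {R M : Type*} [CommRing R] [IsNoetherianRing R]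
    [AddCommGroup M] [Module R M] [IsNoetherian R M] {p : Ideal R}
    (hp : p ∈ associatedPrimes R M) :
    ∃ q ∈ associatedPrimes R M, q ≤ p ∧ ∀ r ∈ associatedPrimes R M, r ≤ q → r = q := by
  have hfin : ((associatedPrimes R M) ∩ {r | r ≤ p}).Finite :=
    (aux_associatedPrimes_finite R M).inter_of_left _
  obtain ⟨q, hq, hmin⟩ := hfin.toFinset.exists_minimal
    (by rw [Set.Finite.toFinset_nonempty]; exact ⟨p, hp, le_refl p⟩)
  rw [Set.Finite.mem_toFinset] at hq
  refine ⟨q, hq.1, hq.2, fun r hr hrq => ?_⟩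
  by_contra hne
  exact hne (le_antisymm hrq (hmin (Set.Finite.mem_toFinset _ |>.mpr ⟨hr, hrq.trans hq.2⟩) hrq))

end Aux

-- Noetherian ring instances and antitonicity lemmas

instance laurent_addMonoid_fg (d : ℕ) : AddMonoid.FG (Fin d → ℤ) :=
  AddGroup.fg_iff_addMonoid_fg.mp (Module.Finite.iff_addGroup_fg.mp inferInstance)

instance laurent_isNoetherianRing (d : ℕ) : IsNoetherianRing (LaurentRing d) :=
  Algebra.FiniteType.isNoetherianRing ℤ (LaurentRing d)

lemma Nv_antitone {d : ℕ} {p q : Ideal (LaurentRing d)} (h : q ≤ p) : Nv p ⊆ Nv q := by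
  rintro v ⟨t, ht, z, hz, hvan, hlog⟩
  exact ⟨t, ht, z, hz, fun f hf => hvan f (h hf), hlog⟩

lemma Nn_antitone {d : ℕ} {p q : Ideal (LaurentRing d)} (h : q ≤ p) : Nn p ⊆ Nn q := by
  intro v hv hnq
  apply hv
  letI : Module (RH (v : Rspace d)) (LaurentRing d ⧸ q) :=
    Module.compHom _ (RH (v : Rspace d)).subtype
  letI : Module (RH (v : Rspace d)) (LaurentRing d ⧸ p) :=
    Module.compHom _ (RH (v : Rspace d)).subtype
  have hq' : IsNoetherian (RH (v : Rspace d)) (LaurentRing d ⧸ q) := hnq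
  let f0 : (LaurentRing d ⧸ q) →ₗ[LaurentRing d] (LaurentRing d ⧸ p) :=
    Submodule.mapQ q p LinearMap.id (by simpa using h)
  have hsurj : Function.Surjective f0 := by
    intro y
    obtain ⟨x, rfl⟩ := Submodule.Quotient.mk_surjective p y
    exact ⟨Submodule.Quotient.mk x, rfl⟩
  let f : (LaurentRing d ⧸ q) →ₗ[RH (v : Rspace d)] (LaurentRing d ⧸ p) :=
    { toFun := f0
      map_add' := f0.map_add
      map_smul' := fun s x => f0.map_smul (s : LaurentRing d) x }
  exact (isNoetherian_of_surjective f (LinearMap.range_eq_top.mpr hsurj) :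
    IsNoetherian (RH (v : Rspace d)) (LaurentRing d ⧸ p))

/-- Let `M` be a Noetherian `R_d`-module and `min(M)` the set of
minimal associated primes.  Then `N^n(α_M) = ⋃_{p ∈ min(M)} N^n(α_{R_d/p})`,
`N^v(α_M) = ⋃_{p ∈ min(M)} N^v(α_{R_d/p})`, and consequently
`N(α_M) = ⋃_{p ∈ min(M)} (N^n(α_{R_d/p}) ∪ N^v(α_{R_d/p}))`. -/
theorem nonexpansive_sets_eq_union_min_primes {d : ℕ} (M : Type*) [AddCommGroup M]
    [Module (LaurentRing d) M] [IsNoetherian (LaurentRing d) M] :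
    NnM d M = (⋃ p ∈ minAssocPrimes d M, Nn p) ∧
    NvM d M = (⋃ p ∈ minAssocPrimes d M, Nv p) ∧
    NnM d M ∪ NvM d M = ⋃ p ∈ minAssocPrimes d M, (Nn p ∪ Nv p) := by
  have hmin_sub : minAssocPrimes d M ⊆ associatedPrimes (LaurentRing d) M := fun q hq => hq.1
  have key : ∀ (F : Ideal (LaurentRing d) → Set (Metric.sphere (0 : Rspace d) 1)),
      (∀ {p q : Ideal (LaurentRing d)}, q ≤ p → F p ⊆ F q) →
      (⋃ p ∈ associatedPrimes (LaurentRing d) M, F p) = ⋃ p ∈ minAssocPrimes d M, F p := by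
    intro F hF
    apply Set.Subset.antisymm
    · intro v hv
      simp only [Set.mem_iUnion] at hv ⊢
      obtain ⟨p, hp, hvp⟩ := hv
      obtain ⟨q, hq, hqp, hmin⟩ := aux_exists_min_le hp
      exact ⟨q, ⟨hq, fun r hr hrq => hmin r hr hrq⟩, hF hqp hvp⟩
    · exact Set.biUnion_mono hmin_sub (fun _ _ => le_refl _)
  have h1 : NnM d M = ⋃ p ∈ minAssocPrimes d M, Nn p := key Nn (fun h => Nn_antitone h)
  have h2 : NvM d M = ⋃ p ∈ minAssocPrimes d M, Nv p := key Nv (fun h => Nv_antitone h)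
  refine ⟨h1, h2, ?_⟩
  rw [h1, h2]
  ext v
  simp only [Set.mem_union, Set.mem_iUnion]
  constructor
  · rintro (⟨p, hp, hv⟩ | ⟨p, hp, hv⟩)
    · exact ⟨p, hp, Or.inl hv⟩
    · exact ⟨p, hp, Or.inr hv⟩
  · rintro ⟨p, hp, hv | hv⟩
    · exact Or.inl ⟨p, hp, hv⟩
    · exact Or.inr ⟨p, hp, hv⟩
end
end

section
/- Let M be a Noetherian R_d-module generated by m_1,…,m_r, let K = {(f_1,…,f_r) ∈ R_d^r : f_1·m_1 + ⋯ + f_r·m_r = 0}, let A = [a_{ij}] be an s×r matrix over R_d whose rows generate K as an R_d-module, and let f(M) be the ideal of R_d generated by all r×r subdeterminants of A (the Fitting ideal of M). Then N^n(α_M) = N^n(α_{R_d/f(M)}) and N^v(α_M) = N^v(α_{R_d/f(M)}), and consequently N(α_M) = N^n(α_{R_d/f(M)}) ∪ N^v(α_{R_d/f(M)}). -/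
open scoped RealInnerProductSpace

noncomputable section

/-- The Fitting ideal of a presentation matrix `A`: the ideal of `R_d` generated by all
`r × r` subdeterminants of the `s × r` matrix `A`. -/
def fittingIdealOf {d r s : ℕ} (A : Matrix (Fin s) (Fin r) (LaurentRing d)) :
    Ideal (LaurentRing d) :=
  Ideal.span {x : LaurentRing d |
    ∃ σ : Fin r → Fin s, Function.Injective σ ∧ x = (A.submatrix σ id).det}

/-! ### Auxiliary general commutative algebra lemmas -/

section GeneralCommAlg

theorem smul_all_zero {R M : Type*} [CommRing R] [AddCommGroup M] [Module R M] {r : ℕ}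
    {m : Fin r → M} (hgen : Submodule.span R (Set.range m) = ⊤) {c : R}
    (hc : ∀ i, c • m i = 0) (x : M) : c • x = 0 := by
  have hx : x ∈ Submodule.span R (Set.range m) := hgen ▸ Submodule.mem_top
  induction hx using Submodule.span_induction with
  | mem x h => obtain ⟨i, rfl⟩ := h; exact hc i
  | zero => simp
  | add x y hx hy ihx ihy => rw [smul_add, ihx, ihy, add_zero]
  | smul a x hx ih => rw [smul_comm, ih, smul_zero]

/-- Cauchy–Binet style expansion: the determinant of `C * A` lies in the ideal generated by
the maximal subdeterminants of `A`. -/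
theorem det_mul_mem_span_subdets {R : Type*} [CommRing R] {r s : ℕ}
    (A : Matrix (Fin s) (Fin r) R) (Cm : Matrix (Fin r) (Fin s) R) :
    (Cm * A).det ∈ Ideal.span
      {x : R | ∃ σ : Fin r → Fin s, Function.Injective σ ∧ x = (A.submatrix σ id).det} := by
  classical
  have h1 : (Cm * A) = fun i => ∑ j, Cm i j • A j := by
    funext i k
    simp [Matrix.mul_apply, Finset.sum_apply]
  have h2 := (Matrix.detRowAlternating.toMultilinearMap).map_sum
      (g := fun (i : Fin r) (j : Fin s) => Cm i j • A j)
  have hdet : (Cm * A).det = ∑ φ : Fin r → Fin s,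
      (∏ i, Cm i (φ i)) • (A.submatrix φ id).det := by
    calc (Cm * A).det
        = Matrix.detRowAlternating.toMultilinearMap (fun i => ∑ j, Cm i j • A j) := by
          rw [← h1]; rfl
      _ = ∑ φ : Fin r → Fin s,
            Matrix.detRowAlternating.toMultilinearMap (fun i => Cm i (φ i) • A (φ i)) := h2
      _ = ∑ φ : Fin r → Fin s, (∏ i, Cm i (φ i)) • (A.submatrix φ id).det := by
          refine Finset.sum_congr rfl fun φ _ => ?_
          rw [MultilinearMap.map_smul_univ]
          rfl
  rw [hdet]
  apply Ideal.sum_mem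
  intro φ _
  by_cases hφ : Function.Injective φ
  · rw [smul_eq_mul]
    exact Ideal.mul_mem_left _ _ (Ideal.subset_span ⟨φ, hφ, rfl⟩)
  · obtain ⟨i, j, hij, hne⟩ := Function.not_injective_iff.mp hφ
    have hz : (A.submatrix φ id).det = 0 :=
      Matrix.det_zero_of_row_eq hne (by funext k; simp [Matrix.submatrix_apply, hij])
    rw [hz, smul_zero]
    exact zero_mem _

/-- Every prime containing the annihilator of a nonzero finite module over a Noetherian ring
contains an associated prime. -/
theorem exists_assoc_le {R : Type*} [CommRing R] [IsNoetherianRing R]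
    {M : Type*} [AddCommGroup M] [Module R M] [Module.Finite R M] [Nontrivial M]
    (P : Ideal R) (hP : P.IsPrime)
    (hann : (⊤ : Submodule R M).annihilator ≤ P) :
    ∃ q ∈ associatedPrimes R M, q ≤ P := by
  classical
  have h1P : (1 : R) ∉ P := (Ideal.ne_top_iff_one P).mp hP.ne_top
  -- the `P`-torsion submodule
  let N : Submodule R M :=
    { carrier := {x | ∃ s, s ∉ P ∧ s • x = 0}
      add_mem' := by
        rintro x y ⟨u, hu, hux⟩ ⟨t, ht, hty⟩
        refine ⟨u * t, fun h => (hP.mem_or_mem h).elim hu ht, ?_⟩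
        have hx' : (u * t) • x = 0 := by rw [mul_comm, mul_smul, hux, smul_zero]
        have hy' : (u * t) • y = 0 := by rw [mul_smul, hty, smul_zero]
        rw [smul_add, hx', hy', add_zero]
      zero_mem' := ⟨1, h1P, smul_zero 1⟩
      smul_mem' := by
        rintro c x ⟨u, hu, hux⟩
        exact ⟨u, hu, by rw [smul_comm, hux, smul_zero]⟩ }
  have hmemN : ∀ x : M, x ∈ N ↔ ∃ s, s ∉ P ∧ s • x = 0 := fun _ => Iff.rfl
  have hNtop : N ≠ ⊤ := by
    intro hN
    have hx : ∀ x : M, ∃ s, s ∉ P ∧ s • x = 0 := fun x => (hmemN x).mp (hN ▸ Submodule.mem_top)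
    choose σ hσP hσ0 using hx
    obtain ⟨F, hF⟩ := Module.finite_def.mp ‹Module.Finite R M›
    have huP : (∏ g ∈ F, σ g) ∉ P :=
      Finset.prod_induction _ (fun z => z ∉ P)
        (fun a b ha hb h => (hP.mem_or_mem h).elim ha hb) h1P (fun g _ => hσP g)
    have hukill : ∀ x : M, (∏ g ∈ F, σ g) • x = 0 := by
      intro x
      have hxmem : x ∈ Submodule.span R (F : Set M) := hF ▸ Submodule.mem_top
      induction hxmem using Submodule.span_induction with
      | mem g hg =>
          rw [← Finset.mul_prod_erase F σ hg, mul_comm, mul_smul, hσ0 g, smul_zero]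
      | zero => simp
      | add x y hx hy ihx ihy => rw [smul_add, ihx, ihy, add_zero]
      | smul a x hx ih => rw [smul_comm, ih, smul_zero]
    exact huP (hann (Submodule.mem_annihilator.mpr fun x _ => hukill x))
  have hreg : ∀ (c : R) (y : M ⧸ N), c ∉ P → c • y = 0 → y = 0 := by
    intro c y hc hcy
    obtain ⟨x, rfl⟩ := Submodule.mkQ_surjective N y
    rw [Submodule.mkQ_apply, ← Submodule.Quotient.mk_smul, Submodule.Quotient.mk_eq_zero] at hcy
    obtain ⟨t, ht, htx⟩ := hcy
    rw [Submodule.mkQ_apply, Submodule.Quotient.mk_eq_zero]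
    exact ⟨t * c, fun h => (hP.mem_or_mem h).elim ht hc, by rw [mul_smul]; exact htx⟩
  haveI : Nontrivial (M ⧸ N) := Submodule.Quotient.nontrivial_iff.mpr hNtop
  obtain ⟨y₁, hy₁⟩ := exists_ne (0 : M ⧸ N)
  obtain ⟨q, hqmem, hqmax⟩ := set_has_maximal_iff_noetherian.mpr (isNoetherianRing_iff.mp ‹_›)
    {I : Ideal R | ∃ y : M ⧸ N, y ≠ 0 ∧ I = (R ∙ y).annihilator}
    ⟨(R ∙ y₁).annihilator, y₁, hy₁, rfl⟩
  obtain ⟨y₀, hy₀ne, hy₀⟩ := hqmem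
  have hqy : ∀ c : R, c ∈ q ↔ c • y₀ = 0 := fun c => by
    rw [hy₀, Submodule.mem_annihilator_span_singleton]
  have hq_le_P : q ≤ P := by
    intro c hc
    by_contra hcP
    exact hy₀ne (hreg c y₀ hcP ((hqy c).mp hc))
  have hq_prime : Ideal.IsPrime (q : Ideal R) := by
    refine ⟨?_, ?_⟩
    · intro h
      exact hy₀ne (by simpa using (hqy 1).mp (h ▸ Submodule.mem_top))
    · intro x y hxy
      by_contra hcon
      push_neg at hcon
      obtain ⟨hx, hy⟩ := hcon
      have hyy : y • y₀ ≠ 0 := fun h => hy ((hqy y).mpr h)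
      have hle : q ≤ (R ∙ (y • y₀)).annihilator := by
        intro c hc
        rw [Submodule.mem_annihilator_span_singleton, smul_comm, (hqy c).mp hc, smul_zero]
      have hnlt := hqmax _ ⟨y • y₀, hyy, rfl⟩
      have heq : q = (R ∙ (y • y₀)).annihilator := (hle.lt_or_eq).resolve_left hnlt
      apply hx
      rw [heq, Submodule.mem_annihilator_span_singleton, smul_smul]
      exact (hqy (x * y)).mp hxy
  -- lift `y₀` to `M`
  obtain ⟨x₀, hx₀⟩ := Submodule.mkQ_surjective N y₀
  rw [Submodule.mkQ_apply] at hx₀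
  have hqfg : Submodule.FG q := IsNoetherian.noetherian q
  obtain ⟨T, hT⟩ := hqfg
  have hTN : ∀ c, c ∈ T → ∃ s, s ∉ P ∧ s • (c • x₀) = 0 := by
    intro c hc
    have hcq : c ∈ q := hT ▸ Submodule.subset_span hc
    have : c • x₀ ∈ N := by
      rw [← Submodule.Quotient.mk_eq_zero N, Submodule.Quotient.mk_smul, hx₀]
      exact (hqy c).mp hcq
    exact (hmemN _).mp this
  choose σ hσP hσ0 using hTN
  have huP : (∏ e ∈ T.attach, σ e.1 e.2) ∉ P :=
    Finset.prod_induction _ (fun z => z ∉ P)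
      (fun a b ha hb h => (hP.mem_or_mem h).elim ha hb) h1P (fun e _ => hσP e.1 e.2)
  set u : R := ∏ e ∈ T.attach, σ e.1 e.2 with hu
  set x₁ : M := u • x₀ with hx₁
  have hx₁proj : (Submodule.Quotient.mk x₁ : M ⧸ N) = u • y₀ := by
    rw [hx₁, Submodule.Quotient.mk_smul, hx₀]
  have huy₀ : u • y₀ ≠ 0 := fun h => huP (hq_le_P ((hqy u).mpr h))
  have hkillT : ∀ c ∈ T, c • x₁ = 0 := by
    intro c hc
    have hfac := Finset.mul_prod_erase T.attach (fun e => σ e.1 e.2) (Finset.mem_attach T ⟨c, hc⟩)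
    calc c • x₁ = (c * u) • x₀ := by rw [hx₁, smul_smul]
      _ = ((∏ e ∈ T.attach.erase ⟨c, hc⟩, σ e.1 e.2) * (σ c hc * c)) • x₀ := by
          rw [hu, ← hfac]; ring_nf
      _ = (∏ e ∈ T.attach.erase ⟨c, hc⟩, σ e.1 e.2) • σ c hc • c • x₀ := by
          rw [mul_smul, mul_smul]
      _ = 0 := by rw [hσ0 c hc, smul_zero]
  have hkillq : ∀ c ∈ q, c • x₁ = 0 := by
    intro c hc
    rw [← hT] at hc
    induction hc using Submodule.span_induction with
    | mem g hg => exact hkillT g hg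
    | zero => simp
    | add a b _ _ iha ihb => rw [add_smul, iha, ihb, add_zero]
    | smul a b _ ih => rw [smul_eq_mul, mul_smul, ih, smul_zero]
  have hannx₁ : q = (R ∙ x₁).annihilator := by
    apply le_antisymm
    · intro c hc
      rw [Submodule.mem_annihilator_span_singleton]
      exact hkillq c hc
    · intro c hc
      rw [Submodule.mem_annihilator_span_singleton] at hc
      have hmk : (c * u) • y₀ = 0 := by
        rw [mul_smul, ← hx₁proj, ← Submodule.Quotient.mk_smul, hc, Submodule.Quotient.mk_eq_zero]
        exact N.zero_mem
      rcases hq_prime.mem_or_mem ((hqy (c * u)).mpr hmk) with h | h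
      · exact h
      · exact absurd (hq_le_P h) huP
  have hcol : (⊥ : Submodule R M).colon {x₁} = q := by
    rw [hannx₁]; ext c; simp [Submodule.mem_colon_singleton, Submodule.mem_annihilator_span_singleton]
  exact ⟨q, ⟨hq_prime, x₁, by rw [hcol, hq_prime.radical]⟩, hq_le_P⟩

end GeneralCommAlg

/-! ### The Laurent ring is Noetherian -/

instance laurentRing_isNoetherianRing (d : ℕ) : IsNoetherianRing (LaurentRing d) := by
  haveI h1 : AddGroup.FG (Fin d → ℤ) :=
    Module.Finite.iff_addGroup_fg.mp inferInstance
  haveI h2 : AddMonoid.FG (Fin d → ℤ) :=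
    AddMonoid.fg_iff_mul_fg.mpr (Group.fg_iff_monoid_fg.mp (AddGroup.fg_iff_mul_fg.mp h1))
  haveI h3 : Algebra.FiniteType ℤ (LaurentRing d) := AddMonoidAlgebra.finiteType_of_fg ℤ _
  obtain ⟨n, f, hf⟩ := Algebra.FiniteType.iff_quotient_mvPolynomial''.mp h3
  exact isNoetherianRing_of_surjective _ _ f.toRingHom hf

/-! ### Stability lemmas for `NoetherianOver` -/

namespace NoetherianOver

variable {d : ℕ} {S : Subring (LaurentRing d)}

theorem of_surjective {M N : Type*} [AddCommGroup M] [Module (LaurentRing d) M]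
    [AddCommGroup N] [Module (LaurentRing d) N] (h : NoetherianOver S M)
    (f : M →ₗ[LaurentRing d] N) (hf : Function.Surjective f) : NoetherianOver S N := by
  letI : Module S M := Module.compHom M S.subtype
  letI : Module S N := Module.compHom N S.subtype
  haveI : IsNoetherian S M := h
  let f' : M →ₗ[S] N :=
    { toFun := f, map_add' := f.map_add,
      map_smul' := fun s x => f.map_smul (s : LaurentRing d) x }
  exact isNoetherian_of_surjective f' (LinearMap.range_eq_top.mpr hf)

theorem of_injective {M N : Type*} [AddCommGroup M] [Module (LaurentRing d) M]
    [AddCommGroup N] [Module (LaurentRing d) N] (h : NoetherianOver S N)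
    (f : M →ₗ[LaurentRing d] N) (hf : Function.Injective f) : NoetherianOver S M := by
  letI : Module S M := Module.compHom M S.subtype
  letI : Module S N := Module.compHom N S.subtype
  haveI : IsNoetherian S N := h
  let f' : M →ₗ[S] N :=
    { toFun := f, map_add' := f.map_add,
      map_smul' := fun s x => f.map_smul (s : LaurentRing d) x }
  exact isNoetherian_of_injective f' hf

theorem of_equiv {M N : Type*} [AddCommGroup M] [Module (LaurentRing d) M]
    [AddCommGroup N] [Module (LaurentRing d) N] (h : NoetherianOver S M)
    (e : M ≃ₗ[LaurentRing d] N) : NoetherianOver S N :=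
  h.of_surjective e.toLinearMap e.surjective

theorem of_subsingleton {M : Type*} [AddCommGroup M] [Module (LaurentRing d) M]
    [Subsingleton M] : NoetherianOver S M := by
  letI : Module S M := Module.compHom M S.subtype
  exact isNoetherian_of_finite S M

theorem of_quotient {M : Type*} [AddCommGroup M] [Module (LaurentRing d) M]
    (N : Submodule (LaurentRing d) M) (h1 : NoetherianOver S ↥N)
    (h2 : NoetherianOver S (M ⧸ N)) : NoetherianOver S M := by
  letI : Module S M := Module.compHom M S.subtype
  letI : Module S ↥N := Module.compHom ↥N S.subtype
  letI : Module S (M ⧸ N) := Module.compHom (M ⧸ N) S.subtype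
  haveI : IsNoetherian S ↥N := h1
  haveI : IsNoetherian S (M ⧸ N) := h2
  let f' : ↥N →ₗ[S] M :=
    { toFun := N.subtype, map_add' := fun _ _ => rfl,
      map_smul' := fun s x => N.subtype.map_smul (s : LaurentRing d) x }
  let g' : M →ₗ[S] M ⧸ N :=
    { toFun := N.mkQ, map_add' := N.mkQ.map_add,
      map_smul' := fun s x => N.mkQ.map_smul (s : LaurentRing d) x }
  refine isNoetherian_of_range_eq_ker f' g' ?_
  ext x
  simp only [LinearMap.mem_range, LinearMap.mem_ker]
  constructor
  · rintro ⟨y, rfl⟩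
    show N.mkQ ↑y = 0
    rw [Submodule.mkQ_apply, Submodule.Quotient.mk_eq_zero]
    exact y.2
  · intro hx
    have : x ∈ N := by
      rw [← Submodule.Quotient.mk_eq_zero]
      exact hx
    exact ⟨⟨x, this⟩, rfl⟩

theorem pi {M : Type*} [AddCommGroup M] [Module (LaurentRing d) M]
    (h : NoetherianOver S M) (t : ℕ) : NoetherianOver S (Fin t → M) := by
  letI : Module S M := Module.compHom M S.subtype
  letI : Module S (Fin t → M) := Module.compHom (Fin t → M) S.subtype
  haveI : IsNoetherian S M := h
  exact isNoetherian_pi'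

theorem quot_mono {a b : Ideal (LaurentRing d)} (hab : a ≤ b)
    (h : NoetherianOver S (LaurentRing d ⧸ a)) : NoetherianOver S (LaurentRing d ⧸ b) := by
  refine h.of_surjective (Submodule.mapQ a b LinearMap.id hab) ?_
  intro y
  obtain ⟨x, rfl⟩ := Submodule.mkQ_surjective b y
  exact ⟨Submodule.mkQ a x, by rw [Submodule.mkQ_apply, Submodule.mkQ_apply, Submodule.mapQ_apply,
    LinearMap.id_apply]⟩

theorem span_singleton (b : Ideal (LaurentRing d))
    (hb : NoetherianOver S (LaurentRing d ⧸ b)) {M : Type*} [AddCommGroup M]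
    [Module (LaurentRing d) M] (x : M) (hx : ∀ c ∈ b, c • x = 0) :
    NoetherianOver S ↥((LaurentRing d) ∙ x) := by
  have hle : b ≤ LinearMap.ker (LinearMap.toSpanSingleton (LaurentRing d) M x) := by
    intro c hc
    rw [LinearMap.mem_ker, LinearMap.toSpanSingleton_apply]
    exact hx c hc
  let g := Submodule.liftQ b (LinearMap.toSpanSingleton (LaurentRing d) M x) hle
  have hr : LinearMap.range g = (LaurentRing d) ∙ x := by
    rw [Submodule.range_liftQ, ← LinearMap.span_singleton_eq_range]
  have h1 : NoetherianOver S ↥(LinearMap.range g) :=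
    hb.of_surjective g.rangeRestrict (LinearMap.surjective_rangeRestrict g)
  exact h1.of_equiv (LinearEquiv.ofEq _ _ hr)

/-- A finitely generated module killed by `b` with `R/b` Noetherian over `S` is
Noetherian over `S`. -/
theorem of_fg (b : Ideal (LaurentRing d)) (hb : NoetherianOver S (LaurentRing d ⧸ b))
    {M : Type*} [AddCommGroup M] [Module (LaurentRing d) M]
    (hann : ∀ c ∈ b, ∀ x : M, c • x = 0) (hM : Module.Finite (LaurentRing d) M) :
    NoetherianOver S M := by
  classical
  have key : ∀ F : Finset M, NoetherianOver S ↥(Submodule.span (LaurentRing d) (F : Set M)) := by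
    intro F
    induction F using Finset.induction_on with
    | empty =>
        rw [Finset.coe_empty, Submodule.span_empty]
        exact of_subsingleton
    | @insert a F ha IH =>
        rw [Finset.coe_insert]
        set N : Submodule (LaurentRing d) M := Submodule.span (LaurentRing d) (F : Set M) with hN
        set N' : Submodule (LaurentRing d) M :=
          Submodule.span (LaurentRing d) (insert a (F : Set M)) with hN'
        have hle : N ≤ N' := Submodule.span_mono (Set.subset_insert _ _)
        have hcyc : NoetherianOver S ↥((LaurentRing d) ∙ (N.mkQ a)) := by
          refine span_singleton b hb _ (fun c hc => ?_)
          rw [← map_smul, hann c hc, map_zero]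
        let g : ↥N' →ₗ[LaurentRing d] M ⧸ N := N.mkQ.comp N'.subtype
        have hker : LinearMap.ker g = Submodule.comap N'.subtype N := by
          ext y
          simp only [LinearMap.mem_ker, Submodule.mem_comap, g, LinearMap.comp_apply,
            Submodule.subtype_apply, Submodule.mkQ_apply, Submodule.Quotient.mk_eq_zero]
        have hrange : LinearMap.range g ≤ (LaurentRing d) ∙ (N.mkQ a) := by
          have hmap : Submodule.map N.mkQ N' ≤ (LaurentRing d) ∙ (N.mkQ a) := by
            rw [hN', Submodule.map_span]
            refine Submodule.span_le.mpr ?_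
            rintro _ ⟨u, hu, rfl⟩
            rcases Set.mem_insert_iff.mp hu with rfl | hu
            · exact Submodule.mem_span_singleton_self _
            · have h0 : N.mkQ u = 0 := by
                rw [Submodule.mkQ_apply, Submodule.Quotient.mk_eq_zero]
                exact Submodule.subset_span hu
              rw [h0]
              exact Submodule.zero_mem _
          rintro _ ⟨y, rfl⟩
          exact hmap ⟨(y : M), y.2, rfl⟩
        have h1 : NoetherianOver S ↥(LinearMap.range g) :=
          hcyc.of_injective (Submodule.inclusion hrange) (Submodule.inclusion_injective _)
        have h2 : NoetherianOver S (↥N' ⧸ Submodule.comap N'.subtype N) :=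
          (h1.of_equiv (g.quotKerEquivRange).symm).of_equiv (Submodule.quotEquivOfEq _ _ hker)
        have h3 : NoetherianOver S ↥(Submodule.comap N'.subtype N) :=
          IH.of_equiv (Submodule.comapSubtypeEquivOfLe hle).symm
        exact of_quotient _ h3 h2
  obtain ⟨F, hF⟩ := Module.finite_def.mp hM
  have := key F
  rw [hF] at this
  exact this.of_equiv Submodule.topEquiv

theorem quot_pow (b : Ideal (LaurentRing d)) (hb : NoetherianOver S (LaurentRing d ⧸ b)) :
    ∀ k : ℕ, NoetherianOver S (LaurentRing d ⧸ (b ^ k : Ideal (LaurentRing d)))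
  | 0 => by
      haveI : Subsingleton (LaurentRing d ⧸ (b ^ 0 : Ideal (LaurentRing d))) := by
        rw [pow_zero, Ideal.one_eq_top]
        exact Submodule.Quotient.subsingleton_iff.mpr rfl
      exact of_subsingleton
  | (k + 1) => by
      have IH := quot_pow b hb k
      set I : Ideal (LaurentRing d) := b ^ (k + 1) with hI
      set J : Ideal (LaurentRing d) := b ^ k with hJ
      have hIJ : I ≤ J := Ideal.pow_le_pow_right (Nat.le_succ k)
      set N : Submodule (LaurentRing d) (LaurentRing d ⧸ I) := Submodule.map I.mkQ J with hNdef
      have hNfg : Module.Finite (LaurentRing d) ↥N :=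
        Module.Finite.iff_fg.mpr ((IsNoetherian.noetherian J).map _)
      have hNann : ∀ c ∈ b, ∀ y : ↥N, c • y = 0 := by
        rintro c hc ⟨y, hy⟩
        obtain ⟨t, ht, rfl⟩ := hy
        have htJ : t ∈ J := ht
        apply Subtype.ext
        show c • (I.mkQ t) = 0
        rw [Submodule.mkQ_apply, ← Submodule.Quotient.mk_smul, smul_eq_mul,
          Submodule.Quotient.mk_eq_zero, mul_comm, hI, pow_succ]
        exact Ideal.mul_mem_mul htJ hc
      have hNO_N : NoetherianOver S ↥N := of_fg b hb hNann hNfg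
      have hquot : NoetherianOver S ((LaurentRing d ⧸ I) ⧸ N) :=
        IH.of_equiv (Submodule.quotientQuotientEquivQuotient I J hIJ).symm
      exact of_quotient N hNO_N hquot

/-- If all quotients by associated primes are Noetherian over `S`, so is the module. -/
theorem of_assoc {M : Type*} [AddCommGroup M] [Module (LaurentRing d) M]
    [IsNoetherian (LaurentRing d) M]
    (h : ∀ p ∈ associatedPrimes (LaurentRing d) M, NoetherianOver S (LaurentRing d ⧸ p)) :
    NoetherianOver S M := by
  classical
  obtain ⟨N, hN, hmax⟩ := set_has_maximal_iff_noetherian.mpr ‹IsNoetherian (LaurentRing d) M›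
    {N : Submodule (LaurentRing d) M | NoetherianOver S ↥N} ⟨⊥, of_subsingleton⟩
  rcases eq_or_ne N ⊤ with rfl | hne
  · exact hN.of_equiv Submodule.topEquiv
  · exfalso
    haveI : Nontrivial (M ⧸ N) := Submodule.Quotient.nontrivial_iff.mpr hne
    haveI : Module.Finite (LaurentRing d) M := ⟨IsNoetherian.noetherian ⊤⟩
    haveI : Nontrivial M := by
      obtain ⟨w, hw⟩ : ∃ w, w ∉ N := by
        by_contra hc
        push_neg at hc
        exact hne (eq_top_iff.mpr fun z _ => hc z)
      exact ⟨w, 0, fun hw0 => hw (hw0 ▸ N.zero_mem)⟩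
    obtain ⟨p, hp⟩ := associatedPrimes.nonempty (LaurentRing d) (M ⧸ N)
    obtain ⟨x, hx⟩ := (isAssociatedPrime_iff.mp hp).2
    have hxq : ∀ c : (LaurentRing d), c ∈ p ↔ c • x = 0 := fun c => by
      rw [hx, Submodule.mem_colon_singleton, Submodule.mem_bot]
    have hxne : x ≠ 0 := by
      rintro rfl
      exact hp.1.ne_top (by rw [hx]; ext c; simp [Submodule.mem_colon_singleton])
    have hannP : (⊤ : Submodule (LaurentRing d) M).annihilator ≤ p := by
      refine le_trans ?_ hp.annihilator_le
      intro c hc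
      rw [Submodule.mem_annihilator] at hc ⊢
      intro y _
      obtain ⟨z, rfl⟩ := Submodule.mkQ_surjective N y
      rw [Submodule.mkQ_apply, ← Submodule.Quotient.mk_smul, hc z Submodule.mem_top]
      rfl
    obtain ⟨q, hq, hqp⟩ := exists_assoc_le p hp.1 hannP
    have hRp : NoetherianOver S (LaurentRing d ⧸ p) := (h q hq).quot_mono hqp
    set N' : Submodule (LaurentRing d) M :=
      Submodule.comap N.mkQ ((LaurentRing d) ∙ x) with hN'def
    have hle : N ≤ N' := by
      intro z hz
      rw [Submodule.mem_comap, Submodule.mkQ_apply]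
      have h0 : (Submodule.Quotient.mk z : M ⧸ N) = 0 := (Submodule.Quotient.mk_eq_zero N).mpr hz
      rw [h0]
      exact Submodule.zero_mem _
    obtain ⟨w, hwx⟩ := Submodule.mkQ_surjective N x
    have hwN' : w ∈ N' := by
      rw [Submodule.mem_comap, hwx]
      exact Submodule.mem_span_singleton_self x
    have hwN : w ∉ N := by
      intro hw
      apply hxne
      rw [← hwx, Submodule.mkQ_apply, Submodule.Quotient.mk_eq_zero]
      exact hw
    have hlt : N < N' := lt_of_le_of_ne hle (fun hEq => hwN (hEq.symm ▸ hwN'))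
    have hcyc : NoetherianOver S ↥((LaurentRing d) ∙ x) :=
      span_singleton p hRp x (fun c hc => (hxq c).mp hc)
    let g : ↥N' →ₗ[LaurentRing d] M ⧸ N := N.mkQ.comp N'.subtype
    have hkerg : LinearMap.ker g = Submodule.comap N'.subtype N := by
      ext y
      simp only [LinearMap.mem_ker, Submodule.mem_comap, g, LinearMap.comp_apply,
        Submodule.subtype_apply, Submodule.mkQ_apply, Submodule.Quotient.mk_eq_zero]
    have hrangeg : LinearMap.range g ≤ (LaurentRing d) ∙ x := by
      rintro _ ⟨y, rfl⟩
      exact Submodule.mem_comap.mp y.2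
    have h1 : NoetherianOver S ↥(LinearMap.range g) :=
      hcyc.of_injective (Submodule.inclusion hrangeg) (Submodule.inclusion_injective _)
    have h2 : NoetherianOver S (↥N' ⧸ Submodule.comap N'.subtype N) :=
      (h1.of_equiv (g.quotKerEquivRange).symm).of_equiv (Submodule.quotEquivOfEq _ _ hkerg)
    have h3 : NoetherianOver S ↥(Submodule.comap N'.subtype N) :=
      hN.of_equiv (Submodule.comapSubtypeEquivOfLe hle).symm
    exact hmax N' (of_quotient _ h3 h2) hlt

end NoetherianOver

/-! ### Evaluation as a ring homomorphism -/

/-- The monomial evaluation monoid homomorphism. -/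
def laurentMonHom {d : ℕ} (z : Fin d → ℂ) (hz : ∀ i, z i ≠ 0) :
    Multiplicative (Fin d → ℤ) →* ℂ where
  toFun n := ∏ i, z i ^ (Multiplicative.toAdd n i)
  map_one' := by simp
  map_mul' a b := by
    show ∏ i, z i ^ ((Multiplicative.toAdd a + Multiplicative.toAdd b) i) = _
    rw [← Finset.prod_mul_distrib]
    exact Finset.prod_congr rfl fun i _ => zpow_add₀ (hz i) _ _

/-- Evaluation at `z` as a ring homomorphism. -/
def laurentEvalHom {d : ℕ} (z : Fin d → ℂ) (hz : ∀ i, z i ≠ 0) :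
    LaurentRing d →+* ℂ :=
  AddMonoidAlgebra.liftNCRingHom (Int.castRingHom ℂ) (laurentMonHom z hz)
    (fun _ _ => Commute.all _ _)

theorem laurentEvalHom_apply {d : ℕ} (z : Fin d → ℂ) (hz : ∀ i, z i ≠ 0)
    (f : LaurentRing d) : laurentEvalHom z hz f = laurentEval z f := by
  classical
  conv_lhs => rw [← AddMonoidAlgebra.sum_coeff_single f]
  rw [Finsupp.sum, map_sum]
  unfold laurentEval
  refine Finset.sum_congr rfl fun n _ => ?_
  show laurentEvalHom z hz (AddMonoidAlgebra.single n (f.coeff n)) = _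
  unfold laurentEvalHom
  rw [AddMonoidAlgebra.liftNCRingHom]
  show AddMonoidAlgebra.liftNC ((Int.castRingHom ℂ) : ℤ →+ ℂ) (laurentMonHom z hz)
      (AddMonoidAlgebra.single n (f.coeff n)) = _
  rw [AddMonoidAlgebra.liftNC_single]
  rfl

/-! ### Fitting ideal lemmas -/

theorem fitting_le_ann {d : ℕ} {M : Type*} [AddCommGroup M] [Module (LaurentRing d) M]
    {r s : ℕ} {m : Fin r → M}
    (hgen : Submodule.span (LaurentRing d) (Set.range m) = ⊤)
    (A : Matrix (Fin s) (Fin r) (LaurentRing d))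
    (hA : ∀ c : Fin r → LaurentRing d,
      (∑ i, c i • m i = 0 ↔
        c ∈ Submodule.span (LaurentRing d)
          (Set.range fun j : Fin s => fun i : Fin r => A j i))) :
    fittingIdealOf A ≤ (⊤ : Submodule (LaurentRing d) M).annihilator := by
  classical
  rw [fittingIdealOf, Ideal.span_le]
  rintro x ⟨σ, hσ, rfl⟩
  rw [SetLike.mem_coe, Submodule.mem_annihilator]
  intro n _
  refine smul_all_zero hgen (fun k => ?_) n
  set B : Matrix (Fin r) (Fin r) (LaurentRing d) := A.submatrix σ id with hB
  have hrow : ∀ j : Fin r, ∑ i, B j i • m i = 0 := by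
    intro j
    refine (hA (fun i => A (σ j) i)).mpr (Submodule.subset_span ⟨σ j, rfl⟩)
  have h1 : ∑ i, ((B.adjugate * B) k i) • m i = 0 := by
    calc ∑ i, ((B.adjugate * B) k i) • m i
        = ∑ i, ∑ j, (B.adjugate k j * B j i) • m i := by
          refine Finset.sum_congr rfl fun i _ => ?_
          rw [Matrix.mul_apply, Finset.sum_smul]
      _ = ∑ j, ∑ i, B.adjugate k j • (B j i • m i) := by
          rw [Finset.sum_comm]
          exact Finset.sum_congr rfl fun j _ => Finset.sum_congr rfl fun i _ => mul_smul _ _ _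
      _ = ∑ j, B.adjugate k j • ∑ i, B j i • m i := by
          exact Finset.sum_congr rfl fun j _ => (Finset.smul_sum).symm
      _ = 0 := by
          simp [hrow]
  rw [Matrix.adjugate_mul] at h1
  calc B.det • m k
      = ∑ i, ((B.det • (1 : Matrix (Fin r) (Fin r) (LaurentRing d))) k i) • m i := by
        rw [Finset.sum_eq_single k]
        · simp [Matrix.smul_apply, Matrix.one_apply]
        · intro i _ hik
          simp [Matrix.smul_apply, Matrix.one_apply, Ne.symm hik]
        · intro hk
          exact absurd (Finset.mem_univ k) hk
    _ = 0 := h1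

theorem pow_mem_fitting {d : ℕ} {M : Type*} [AddCommGroup M] [Module (LaurentRing d) M]
    {r s : ℕ} {m : Fin r → M}
    (hgen : Submodule.span (LaurentRing d) (Set.range m) = ⊤)
    (A : Matrix (Fin s) (Fin r) (LaurentRing d))
    (hA : ∀ c : Fin r → LaurentRing d,
      (∑ i, c i • m i = 0 ↔
        c ∈ Submodule.span (LaurentRing d)
          (Set.range fun j : Fin s => fun i : Fin r => A j i)))
    (c : LaurentRing d) (hc : c ∈ (⊤ : Submodule (LaurentRing d) M).annihilator) :
    c ^ r ∈ fittingIdealOf A := by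
  classical
  have hvec : ∀ i : Fin r, ∃ C : Fin s → LaurentRing d,
      ∑ j, C j • (fun i' => A j i') = Pi.single i c := by
    intro i
    apply (Submodule.mem_span_range_iff_exists_fun (LaurentRing d)).mp
    apply (hA (Pi.single i c)).mp
    rw [Finset.sum_eq_single i]
    · rw [Pi.single_eq_same]
      exact Submodule.mem_annihilator.mp hc (m i) Submodule.mem_top
    · intro i' _ hne
      rw [Pi.single_eq_of_ne hne, zero_smul]
    · intro h
      exact absurd (Finset.mem_univ i) h
  choose C hC using hvec
  set Cm : Matrix (Fin r) (Fin s) (LaurentRing d) := Matrix.of (fun i j => C i j) with hCm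
  have hCA : Cm * A = c • (1 : Matrix (Fin r) (Fin r) (LaurentRing d)) := by
    ext i k : 2
    rw [Matrix.mul_apply]
    have h1 := congrFun (hC i) k
    rw [Finset.sum_apply] at h1
    simp only [Pi.smul_apply, smul_eq_mul] at h1
    rw [show (∑ j, Cm i j * A j k) = ∑ j, C i j * A j k from rfl, h1,
      Matrix.smul_apply, Matrix.one_apply, Pi.single_apply, smul_eq_mul]
    by_cases h : k = i
    · subst h; simp
    · simp [h, Ne.symm h]
  have hdet : (Cm * A).det = c ^ r := by
    rw [hCA, Matrix.det_smul, Matrix.det_one, mul_one, Fintype.card_fin]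
  rw [← hdet]
  exact det_mul_mem_span_subdets A Cm

/-- Let `M` be a Noetherian `R_d`-module generated by `m_1, …, m_r`,
let `K` be the kernel of `(f_1,…,f_r) ↦ Σ f_i·m_i`, let `A` be an `s × r` matrix over
`R_d` whose rows generate `K`, and let `f(M)` be the Fitting ideal generated by all
`r × r` subdeterminants of `A`.  Then `N^n(α_M) = N^n(α_{R_d/f(M)})` and
`N^v(α_M) = N^v(α_{R_d/f(M)})`, hence `N(α_M) = N^n(α_{R_d/f(M)}) ∪ N^v(α_{R_d/f(M)})`. -/
theorem nonexpansive_sets_eq_fitting_ideal {d : ℕ} (M : Type*) [AddCommGroup M]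
    [Module (LaurentRing d) M] [IsNoetherian (LaurentRing d) M]
    (r s : ℕ) (m : Fin r → M)
    (hgen : Submodule.span (LaurentRing d) (Set.range m) = ⊤)
    (A : Matrix (Fin s) (Fin r) (LaurentRing d))
    (hA : ∀ c : Fin r → LaurentRing d,
      (∑ i, c i • m i = 0 ↔
        c ∈ Submodule.span (LaurentRing d)
          (Set.range fun j : Fin s => fun i : Fin r => A j i))) :
    NnM d M = Nn (fittingIdealOf A) ∧
    NvM d M = Nv (fittingIdealOf A) ∧
    NnM d M ∪ NvM d M = Nn (fittingIdealOf A) ∪ Nv (fittingIdealOf A) := by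
  classical
  set a : Ideal (LaurentRing d) := fittingIdealOf A with ha
  set ann : Ideal (LaurentRing d) := (⊤ : Submodule (LaurentRing d) M).annihilator with hanndef
  have hfit_le : a ≤ ann := fitting_le_ann hgen A hA
  have hpow : ∀ c ∈ ann, c ^ r ∈ a := fun c hc => pow_mem_fitting hgen A hA c hc
  have hann_rad : ann ≤ a.radical := fun c hc => ⟨r, hpow c hc⟩
  have hassoc_ann : ∀ p ∈ associatedPrimes (LaurentRing d) M, a ≤ p := by
    intro p hp
    exact le_trans hfit_le hp.annihilator_le
  have hNn : NnM d M = Nn a := by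
    ext v
    simp only [NnM, Set.mem_iUnion, Nn, Set.mem_setOf_eq]
    constructor
    · rintro ⟨p, hp, hv⟩
      intro hno
      exact hv (hno.quot_mono (hassoc_ann p hp))
    · intro hv
      by_contra hnot
      apply hv
      have hall : ∀ p ∈ associatedPrimes (LaurentRing d) M,
          NoetherianOver (RH (v : Rspace d)) (LaurentRing d ⧸ p) := by
        intro p hp
        by_contra hcon
        exact hnot ⟨p, hp, hcon⟩
      have hM : NoetherianOver (RH (v : Rspace d)) M := NoetherianOver.of_assoc hall
      have hpi := hM.pi r
      let φ : LaurentRing d →ₗ[LaurentRing d] (Fin r → M) :=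
        LinearMap.pi (fun i => LinearMap.toSpanSingleton (LaurentRing d) M (m i))
      have hker : LinearMap.ker φ = ann := by
        ext c
        rw [LinearMap.mem_ker, hanndef, Submodule.mem_annihilator]
        constructor
        · intro h x _
          have hc : ∀ i, c • m i = 0 := fun i => congrFun h i
          exact smul_all_zero hgen hc x
        · intro h
          funext i
          exact h (m i) Submodule.mem_top
      have h2 : NoetherianOver (RH (v : Rspace d)) ↥(LinearMap.range φ) :=
        hpi.of_injective (Submodule.subtype _) (Submodule.injective_subtype _)
      have h3 : NoetherianOver (RH (v : Rspace d)) (LaurentRing d ⧸ LinearMap.ker φ) :=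
        h2.of_equiv (φ.quotKerEquivRange).symm
      have h4 : NoetherianOver (RH (v : Rspace d)) (LaurentRing d ⧸ ann) :=
        h3.of_equiv (Submodule.quotEquivOfEq _ _ hker)
      obtain ⟨k, hk⟩ := Ideal.exists_radical_pow_le_of_fg a (IsNoetherian.noetherian _)
      have hpowle : ann ^ k ≤ a := le_trans (Ideal.pow_right_mono hann_rad k) hk
      exact (NoetherianOver.quot_pow ann h4 k).quot_mono hpowle
  have hNv : NvM d M = Nv a := by
    ext v
    simp only [NvM, Set.mem_iUnion, Nv, logVariety, Set.mem_setOf_eq]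
    constructor
    · rintro ⟨p, hp, t, ht, z, hz0, hza, hlog⟩
      exact ⟨t, ht, z, hz0, fun f hf => hza f (hassoc_ann p hp hf), hlog⟩
    · rintro ⟨t, ht, z, hz0, hza, hlog⟩
      rcases subsingleton_or_nontrivial M with hM | hM
      · exfalso
        have h1 : (1 : LaurentRing d) ∈ ann :=
          Submodule.mem_annihilator.mpr (fun x _ => Subsingleton.elim _ _)
        have h2 : (1 : LaurentRing d) ∈ a := by
          have := hpow 1 h1
          rwa [one_pow] at this
        have h0 := hza 1 h2
        rw [← laurentEvalHom_apply z hz0, map_one] at h0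
        exact one_ne_zero h0
      · haveI : Module.Finite (LaurentRing d) M := ⟨IsNoetherian.noetherian ⊤⟩
        set E := RingHom.ker (laurentEvalHom z hz0) with hE
        haveI hEp : E.IsPrime := RingHom.ker_isPrime _
        have haE : a ≤ E := by
          intro f hf
          rw [hE, RingHom.mem_ker, laurentEvalHom_apply]
          exact hza f hf
        have hannE : ann ≤ E := le_trans hann_rad (hEp.radical_le_iff.mpr haE)
        obtain ⟨q, hq, hqE⟩ := exists_assoc_le E hEp hannE
        refine ⟨q, hq, t, ht, z, hz0, fun f hf => ?_, hlog⟩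
        have := hqE hf
        rwa [hE, RingHom.mem_ker, laurentEvalHom_apply] at this
  exact ⟨hNn, hNv, by rw [hNn, hNv]⟩
end
end

section
/- Let β be a ℤ^d-action on a compact metric space (X,ρ), let V be a linear subspace of ℝ^d that is expansive for β, and let y_0 ∈ X. Then the set Δ_β(y_0,V) of points of X homoclinic to y_0 along V is at most countable. -/
open scoped RealInnerProductSpace

noncomputable section

/-- `x` is homoclinic to `y₀` along the subspace (or subset) `V ⊆ ℝ^d` for the action
`β`: for some thickening `V^t` of `V`, `dist(β^n x, β^n y₀) → 0` as `‖n‖ → ∞` with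
`n ∈ V^t ∩ ℤ^d`. -/
def HomoclinicAlong {d : ℕ} {X : Type*} [MetricSpace X] (β : (Fin d → ℤ) → X ≃ₜ X)
    (V : Set (Rspace d)) (y₀ x : X) : Prop :=
  ∃ t > 0, ∀ ε > 0, ∃ R : ℝ, ∀ n : Fin d → ℤ,
    Metric.infDist (intVec n) V ≤ t → R ≤ ‖intVec n‖ → dist (β n x) (β n y₀) < ε

lemma intVec_sub {d : ℕ} (m k : Fin d → ℤ) : intVec (m - k) = intVec m - intVec k := by
  ext i
  simp [intVec]

lemma abs_coord_le {d : ℕ} (x : Rspace d) (i : Fin d) : |x i| ≤ ‖x‖ := by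
  rw [EuclideanSpace.norm_eq]
  rw [show |x i| = Real.sqrt (‖x i‖ ^ 2) by
    rw [Real.sqrt_sq (norm_nonneg _), Real.norm_eq_abs]]
  apply Real.sqrt_le_sqrt
  exact Finset.single_le_sum (fun j _ => sq_nonneg ‖x j‖) (Finset.mem_univ i)

lemma finite_of_separated {Y : Type*} [MetricSpace Y] [CompactSpace Y] {δ : ℝ} (hδ : 0 < δ)
    {s : Set Y} (hs : ∀ a ∈ s, ∀ b ∈ s, a ≠ b → δ < dist a b) : s.Finite := by
  by_contra h
  have h : s.Infinite := h
  obtain ⟨C, -, hCfin, hCcov⟩ := totallyBounded_iff_subset.mp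
    isCompact_univ.totallyBounded {p : Y × Y | dist p.1 p.2 < δ / 2}
    (Metric.dist_mem_uniformity (half_pos hδ))
  have hc : ∀ a : Y, ∃ c ∈ C, dist a c < δ / 2 := by
    intro a
    have := hCcov (Set.mem_univ a)
    simpa using this
  choose f hfC hfd using hc
  obtain ⟨a, ha, b, hb, hab, hfab⟩ := h.exists_ne_map_eq_of_mapsTo
    (fun a _ => hfC a) hCfin
  have h1 := hfd a
  have h2 := hfd b
  have hsep := hs a ha b hb hab
  have : dist a b ≤ dist a (f a) + dist b (f b) := by
    rw [hfab]; exact dist_triangle_right a b (f b)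
  linarith

lemma exists_shift {d : ℕ} (V : Submodule ℝ (Rspace d)) (t : ℝ) {t'' : ℝ} (ht'' : 0 < t'') :
    ∃ F : Finset (Fin d → ℤ), ∀ n : Fin d → ℤ,
      Metric.infDist (intVec n) (V : Set (Rspace d)) ≤ t →
      ∃ k ∈ F, Metric.infDist (intVec (n - k)) (V : Set (Rspace d)) ≤ t'' := by
  classical
  set T : Set (Rspace d) :=
    {x | (∃ n : Fin d → ℤ, ∃ v ∈ V, x = intVec n - v) ∧ ‖x‖ ≤ t + 1} with hT
  have hTB : TotallyBounded T := by
    refine TotallyBounded.subset (fun x hx => ?_)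
      (isCompact_closedBall (0 : Rspace d) (t + 1)).totallyBounded
    simpa [Metric.mem_closedBall, dist_zero_right] using hx.2
  obtain ⟨W, hWsub, hWfin, hWcov⟩ := totallyBounded_iff_subset.mp hTB
    {p : Rspace d × Rspace d | dist p.1 p.2 < t''} (Metric.dist_mem_uniformity ht'')
  have hWT : ∀ w ∈ W, ∃ k : Fin d → ℤ, ∃ v ∈ V, w = intVec k - v := fun w hw => (hWsub hw).1
  choose! kf vf hvf hwf using hWT
  refine ⟨hWfin.toFinset.image kf, fun n hn => ?_⟩
  have ht0 : (0 : ℝ) ≤ t := le_trans (Metric.infDist_nonneg) hn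
  have hlt : Metric.infDist (intVec n) (V : Set (Rspace d)) < t + 1 := by linarith
  obtain ⟨v, hv, hdv⟩ := (Metric.infDist_lt_iff ⟨0, V.zero_mem⟩).mp hlt
  have hxT : intVec n - v ∈ T := by
    constructor
    · exact ⟨n, v, hv, rfl⟩
    · rw [← dist_eq_norm]; linarith
  obtain ⟨w, hw, hxw⟩ := Set.mem_iUnion₂.mp (hWcov hxT)
  refine ⟨kf w, Finset.mem_image.mpr ⟨w, hWfin.mem_toFinset.mpr hw, rfl⟩, ?_⟩
  have hvv : v - vf w ∈ V := V.sub_mem hv (hvf w hw)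
  have key : intVec (n - kf w) - (v - vf w) = (intVec n - v) - w := by
    rw [intVec_sub]
    conv_rhs => rw [hwf w hw]
    abel
  calc Metric.infDist (intVec (n - kf w)) (V : Set (Rspace d))
      ≤ dist (intVec (n - kf w)) (v - vf w) := Metric.infDist_le_dist_of_mem hvv
    _ = ‖(intVec n - v) - w‖ := by rw [dist_eq_norm, key]
    _ ≤ t'' := by rw [← dist_eq_norm]; exact le_of_lt hxw

theorem homoclinic_set_countable' {d : ℕ} (hd : 1 ≤ d)
    {X : Type*} [MetricSpace X] [CompactSpace X]
    (β : (Fin d → ℤ) → X ≃ₜ X)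
    (hβ : ∀ m n : Fin d → ℤ, ∀ x : X, β (m + n) x = β m (β n x))
    (hβ0 : ∀ x : X, β 0 x = x)
    (V : Submodule ℝ (Rspace d))
    (hexp : ∃ ε > 0, ∃ t > 0, ∀ x y : X,
      (∀ n : Fin d → ℤ, Metric.infDist (intVec n) (V : Set (Rspace d)) ≤ t →
        dist (β n x) (β n y) ≤ ε) → x = y) (y₀ : X) :
    Set.Countable {x : X | ∃ t > 0, ∀ ε > 0, ∃ R : ℝ, ∀ n : Fin d → ℤ,
      Metric.infDist (intVec n) (V : Set (Rspace d)) ≤ t → R ≤ ‖intVec n‖ →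
      dist (β n x) (β n y₀) < ε} := by
  classical
  obtain ⟨ε, hε, t, ht, hex⟩ := hexp
  have cond : ∀ t'' : ℝ, 0 < t'' → ∃ δ > 0, ∀ x y : X,
      (∀ m : Fin d → ℤ, Metric.infDist (intVec m) (V : Set (Rspace d)) ≤ t'' →
        dist (β m x) (β m y) ≤ δ) → x = y := by
    intro t'' ht''
    obtain ⟨F, hF⟩ := exists_shift V t ht''
    have huc : ∀ k : Fin d → ℤ, ∃ δ > 0, ∀ a b : X, dist a b ≤ δ →
        dist (β k a) (β k b) ≤ ε := by
      intro k
      have hc : UniformContinuous (β k) :=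
        CompactSpace.uniformContinuous_of_continuous (β k).continuous
      obtain ⟨δ, hδ, hδ'⟩ := Metric.uniformContinuous_iff.mp hc ε hε
      exact ⟨δ / 2, by positivity, fun a b hab =>
        le_of_lt (hδ' (lt_of_le_of_lt hab (by linarith)))⟩
    choose δg hδg hδg' using huc
    set F' : Finset (Fin d → ℤ) := insert 0 F with hF'
    have hne : F'.Nonempty := ⟨0, Finset.mem_insert_self 0 F⟩
    refine ⟨F'.inf' hne δg, (Finset.lt_inf'_iff hne).mpr fun k _ => hδg k,
      fun x y hxy => ?_⟩
    apply hex
    intro n hn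
    obtain ⟨k, hk, hnk⟩ := hF n hn
    have h2 : dist (β (n - k) x) (β (n - k) y) ≤ δg k :=
      le_trans (hxy _ hnk) (Finset.inf'_le _ (Finset.mem_insert_of_mem hk))
    have h3 := hδg' k _ _ h2
    have hsum : k + (n - k) = n := by abel
    have hrw : ∀ z : X, β n z = β k (β (n - k) z) := by
      intro z
      rw [← hβ, hsum]
    rw [hrw x, hrw y]
    exact h3
  have cond' : ∀ q : ℕ, ∃ δ > 0, ∀ x y : X,
      (∀ m : Fin d → ℤ, Metric.infDist (intVec m) (V : Set (Rspace d)) ≤ 1 / ((q : ℝ) + 1) →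
        dist (β m x) (β m y) ≤ δ) → x = y := by
    intro q
    exact cond (1 / ((q : ℝ) + 1)) (by positivity)
  choose δf hδfpos hδf using cond'
  set A : ℕ → ℕ → Set X := fun q R =>
    {x | ∀ m : Fin d → ℤ, Metric.infDist (intVec m) (V : Set (Rspace d)) ≤ 1 / ((q : ℝ) + 1) →
      (R : ℝ) ≤ ‖intVec m‖ → dist (β m x) (β m y₀) ≤ δf q / 2} with hA
  have hcover : {x : X | ∃ t > 0, ∀ ε > 0, ∃ R : ℝ, ∀ n : Fin d → ℤ,
      Metric.infDist (intVec n) (V : Set (Rspace d)) ≤ t → R ≤ ‖intVec n‖ →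
      dist (β n x) (β n y₀) < ε} ⊆ ⋃ q, ⋃ R, A q R := by
    intro x hx
    obtain ⟨tx, htx, hhom⟩ := hx
    obtain ⟨q, hq⟩ := exists_nat_one_div_lt htx
    obtain ⟨R₀, hR₀⟩ := hhom (δf q / 2) (half_pos (hδfpos q))
    obtain ⟨R, hR⟩ := exists_nat_ge R₀
    refine Set.mem_iUnion.mpr ⟨q, Set.mem_iUnion.mpr ⟨R, ?_⟩⟩
    intro m hm hmR
    exact le_of_lt (hR₀ m (le_trans hm (le_of_lt hq)) (le_trans hR hmR))
  have hfin : ∀ q R : ℕ, (A q R).Finite := by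
    intro q R
    set Bf : Finset (Fin d → ℤ) :=
      Fintype.piFinset (fun _ : Fin d => Finset.Icc (-(R : ℤ)) (R : ℤ)) with hBf
    set Φ : X → ({m // m ∈ Bf} → X) := fun x m => β m.1 x with hΦ
    have hsep : ∀ a ∈ A q R, ∀ b ∈ A q R, a ≠ b → δf q < dist (Φ a) (Φ b) := by
      intro a ha b hb hab
      have hnc : ¬ (∀ m : Fin d → ℤ,
          Metric.infDist (intVec m) (V : Set (Rspace d)) ≤ 1 / ((q : ℝ) + 1) →
          dist (β m a) (β m b) ≤ δf q) := fun hcon => hab (hδf q a b hcon)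
      push_neg at hnc
      obtain ⟨m, hm1, hm2⟩ := hnc
      have hmR : ‖intVec m‖ < (R : ℝ) := by
        by_contra hge
        push_neg at hge
        have h1 := ha m hm1 hge
        have h2 := hb m hm1 hge
        have hdd : dist (β m a) (β m b) ≤ δf q := by
          calc dist (β m a) (β m b)
              ≤ dist (β m a) (β m y₀) + dist (β m y₀) (β m b) := dist_triangle _ _ _
            _ ≤ δf q / 2 + δf q / 2 := add_le_add h1 (by rw [dist_comm]; exact h2)
            _ = δf q := by ring
        linarith
      have hmB : m ∈ Bf := by
        rw [hBf, Fintype.mem_piFinset]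
        intro i
        rw [Finset.mem_Icc]
        have h2 : |(m i : ℝ)| ≤ ‖intVec m‖ := abs_coord_le (intVec m) i
        have h3 : |(m i : ℝ)| < (R : ℝ) := lt_of_le_of_lt h2 hmR
        rw [abs_lt] at h3
        constructor
        · exact_mod_cast h3.1.le
        · exact_mod_cast h3.2.le
      calc δf q < dist (β m a) (β m b) := hm2
        _ = dist (Φ a ⟨m, hmB⟩) (Φ b ⟨m, hmB⟩) := rfl
        _ ≤ dist (Φ a) (Φ b) := dist_le_pi_dist _ _ _
    have himfin : (Φ '' A q R).Finite := by
      apply finite_of_separated (hδfpos q)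
      rintro _ ⟨a, ha, rfl⟩ _ ⟨b, hb, rfl⟩ hne
      exact hsep a ha b hb (fun h => hne (congrArg Φ h))
    apply Set.Finite.of_finite_image himfin
    intro a ha b hb hΦab
    by_contra hne
    have := hsep a ha b hb hne
    rw [hΦab] at this
    simp at this
    linarith [hδfpos q]
  exact Set.Countable.mono hcover
    (Set.countable_iUnion fun q => Set.countable_iUnion fun R => (hfin q R).countable)

/-- Let `β` be a `ℤ^d`-action on a compact metric space `X`, let `V`
be a linear subspace of `ℝ^d` that is expansive for `β`, and let `y₀ ∈ X`.  Then the
set `Δ_β(y₀, V)` of points homoclinic to `y₀` along `V` is at most countable. -/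
theorem homoclinic_set_countable {d : ℕ} (hd : 1 ≤ d)
    {X : Type*} [MetricSpace X] [CompactSpace X]
    (β : (Fin d → ℤ) → X ≃ₜ X)
    (hβ : ∀ m n : Fin d → ℤ, ∀ x : X, β (m + n) x = β m (β n x))
    (hβ0 : ∀ x : X, β 0 x = x)
    (V : Submodule ℝ (Rspace d))
    (hexp : ExpansiveAlong β (V : Set (Rspace d))) (y₀ : X) :
    Set.Countable {x : X | HomoclinicAlong β (V : Set (Rspace d)) y₀ x} :=
  homoclinic_set_countable' hd β hβ hβ0 V hexp y₀
end
end
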